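/- arXiv:1602.04777 — 12 statements merged into one kernel-verified Lean document; each statement's English description precedes it below -/
import Mathlib

section
/- For a partition n = (n_N > ... > n_1) of distinct non-negative integers and the rank-one matrix A = u v^T with u, v in F^N (F a field), the determinant of sum_{j=1}^m c_{n_j} A^{∘n_j} (where ∘ denotes entrywise/Hadamard power) equals Δ_N(u) Δ_N(v) times the sum over all N-element subsets n' of n of s_{λ(n')}(u) s_{λ(n')}(v) ∏_k c_{n'_k}, where λ(n') is obtained by subtracting the staircase (N-1,...,1,0) from n' and Δ_N denotes the Vandermonde determinant. -/
open Matrix BigOperators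

/-- Complete homogeneous symmetric polynomial `h_k`, as a function of a point `x ∈ F^N`. -/
def hfun {F : Type*} [CommRing F] {N : ℕ} (x : Fin N → F) (k : ℕ) : F :=
  ∑ d ∈ Finset.univ.filter (fun d : Fin N → Fin (k + 1) => ∑ i, (d i : ℕ) = k),
    ∏ i, x i ^ (d i : ℕ)

/-- Schur polynomial (via the Jacobi–Trudi identity) of the partition `lam`,
evaluated at the point `x ∈ F^N`. -/
def schurAt {F : Type*} [CommRing F] {N : ℕ} (x : Fin N → F) (lam : Fin N → ℕ) : F :=
  Matrix.det (Matrix.of fun i j : Fin N =>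
    if (i : ℕ) ≤ lam i + (j : ℕ) then hfun x (lam i + (j : ℕ) - (i : ℕ)) else 0)

/-- The hook partition `μ(M,N,j) = (M-N+1, 1^{N-j-1}, 0^j)`. -/
def hookP (M N j : ℕ) : Fin N → ℕ :=
  fun i => if (i : ℕ) = 0 then M - N + 1 else if (i : ℕ) < N - j then 1 else 0

/-- Vandermonde determinant `Δ_N(x) = ∏_{i<j} (x_i - x_j)`. -/
def vdm {F : Type*} [CommRing F] {N : ℕ} (x : Fin N → F) : F :=
  ∏ i : Fin N, ∏ j ∈ Finset.Ioi i, (x i - x j)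

/-!
Write the matrix as `B * C` with `B i j = u_i ^ n_j` and `C j k = c_j v_k ^ n_j`; the Cauchy–Binet
formula expands its determinant over the `N`-element subsets `s` of the exponents, and each minor is
a generalized Vandermonde determinant `det (x_i ^ ν_j)` with `ν` strictly increasing.

Such a determinant factors as `det E * det H`: comparing coefficients in
`∏_{k ≠ i} (1 - x_k T) * ∏_k (1 - x_k T)⁻¹ = (1 - x_i T)⁻¹` gives
`x_i ^ p = ∑_r (-1)^r e_r(x_k : k ≠ i) h_{p-r}(x)`, i.e. `(x_i ^ ν_j) = E * H` with `E` independent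
of `ν` and `H r j = h_{ν_j - r}`. Up to reversing rows and columns, `H` is the Jacobi–Trudi
matrix of `λ = ν - (0, 1, …, N-1)`; for `ν_j = j` it is unitriangular, so `det E` is the Vandermonde
determinant.
-/

section CompleteHomogeneous

open Finset PowerSeries

variable {R : Type*} [CommRing R] {N : ℕ}

theorem PowerSeries.mk_pow_mul_one_sub_C_mul_X (a : R) : mk (a ^ ·) * (1 - C a * X) = 1 := by
  simpa [rescale_mk, rescale_X] using congrArg (rescale a) (mk_one_mul_one_sub_eq_one R)

theorem coeff_prod_mk_pow (x : Fin N → R) (p : ℕ) :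
    coeff p (∏ k, mk (x k ^ ·)) = hfun x p := by
  classical
  rw [coeff_prod, hfun]
  simp only [coeff_mk]
  have hlt {l : Fin N →₀ ℕ} (hl : l ∈ univ.finsuppAntidiag p) (k : Fin N) : l k < p + 1 :=
    Nat.lt_succ_of_le <| (mem_finsuppAntidiag.1 hl).1 ▸ single_le_sum (by simp) (mem_univ k)
  refine sum_nbij' (fun l k => Fin.ofNat (p + 1) (l k))
    (fun d => Finsupp.equivFunOnFinite.symm fun k => (d k : ℕ)) ?_ ?_ ?_ ?_ ?_
  · intro l hl
    simpa [Fin.val_ofNat, Nat.mod_eq_of_lt (hlt hl _)] using (mem_finsuppAntidiag.1 hl).1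
  · intro d hd
    simpa [mem_finsuppAntidiag] using hd
  · intro l hl
    ext k
    simp [Nat.mod_eq_of_lt (hlt hl k)]
  · intro d _
    ext k
    simp
  · intro l hl
    simp [Nat.mod_eq_of_lt (hlt hl _)]

theorem Polynomial.coeff_prod_one_sub_C_mul_X_eq_zero {ι : Type*} (s : Finset ι) (x : ι → R)
    {r : ℕ} (hr : s.card < r) :
    (∏ k ∈ s, (1 - Polynomial.C (x k) * Polynomial.X)).coeff r = 0 := by
  have hdeg (k : ι) : (1 - Polynomial.C (x k) * Polynomial.X).natDegree ≤ 1 := by compute_degree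
  refine Polynomial.coeff_eq_zero_of_natDegree_lt (lt_of_le_of_lt ?_ hr)
  simpa using (Polynomial.natDegree_prod_le _ _).trans (sum_le_card_nsmul s _ 1 fun k _ => hdeg k)

theorem PowerSeries.coe_prod_one_sub_C_mul_X {ι : Type*} (s : Finset ι) (x : ι → R) :
    (↑(∏ k ∈ s, (1 - Polynomial.C (x k) * Polynomial.X : Polynomial R)) : R⟦X⟧) =
      ∏ k ∈ s, (1 - C (x k) * X) := by
  rw [← Polynomial.coeToPowerSeries.ringHom_apply, map_prod]
  simp [Polynomial.coe_C, Polynomial.coe_X]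

theorem prod_erase_one_sub_C_mul_X_mul_prod_mk_pow (x : Fin N → R) (i : Fin N) :
    (∏ k ∈ univ.erase i, (1 - C (x k) * X)) * ∏ k, mk (x k ^ ·) = mk (x i ^ ·) := by
  rw [← mul_prod_erase univ _ (mem_univ i), mul_left_comm, ← prod_mul_distrib]
  simp only [fun k => mul_comm (1 - C (x k) * X), mk_pow_mul_one_sub_C_mul_X, prod_const_one,
    mul_one]

end CompleteHomogeneous

section JacobiTrudi

open Finset

variable {R : Type*} [CommRing R] {N : ℕ}

/-- Row `i` holds the coefficients `(-1)^r e_r(x_k : k ≠ i)` of `∏_{k ≠ i} (1 - x_k T)`. -/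
noncomputable def eMatrix (x : Fin N → R) : Matrix (Fin N) (Fin N) R :=
  of fun i r => (∏ k ∈ univ.erase i, (1 - Polynomial.C (x k) * Polynomial.X)).coeff r

def hMatrix (x : Fin N → R) (α : Fin N → ℕ) : Matrix (Fin N) (Fin N) R :=
  of fun r j => if (r : ℕ) ≤ α j then hfun x (α j - r) else 0

def genVandermonde {ι κ : Type*} (x : ι → R) (α : κ → ℕ) : Matrix ι κ R :=
  of fun i j => x i ^ α j

theorem pow_eq_sum_eMatrix_mul (x : Fin N → R) (i : Fin N) (p : ℕ) :
    x i ^ p = ∑ r : Fin N, eMatrix x i r * if (r : ℕ) ≤ p then hfun x (p - r) else 0 := by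
  have hseries := congrArg (PowerSeries.coeff p) (prod_erase_one_sub_C_mul_X_mul_prod_mk_pow x i)
  rw [← PowerSeries.coe_prod_one_sub_C_mul_X, PowerSeries.coeff_mk, PowerSeries.coeff_mul,
    Nat.sum_antidiagonal_eq_sum_range_succ_mk] at hseries
  set P := ∏ k ∈ univ.erase i, (1 - Polynomial.C (x k) * Polynomial.X)
  set f : ℕ → R := fun r => P.coeff r * if r ≤ p then hfun x (p - r) else 0
  have hP : ∀ r, N ≤ r → P.coeff r = 0 := fun r hr =>
    Polynomial.coeff_prod_one_sub_C_mul_X_eq_zero _ _ (by simpa using Nat.sub_one_lt_of_le i.pos hr)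
  calc x i ^ p = ∑ r ∈ range (p + 1), f r := by
        rw [← hseries]
        refine sum_congr rfl fun r hr => ?_
        simp [f, Polynomial.coeff_coe, coeff_prod_mk_pow, Nat.le_of_lt_succ (mem_range.1 hr)]
    _ = ∑ r ∈ range (p + 1 + N), f r :=
        sum_subset (range_subset_range.2 (by omega)) fun r _ hr => by simp_all [f]
    _ = ∑ r ∈ range N, f r :=
        (sum_subset (range_subset_range.2 (by omega)) fun r _ hr => by simp_all [f, hP r]).symm
    _ = _ := (Fin.sum_univ_eq_sum_range f N).symm

theorem genVandermonde_eq_eMatrix_mul_hMatrix (x : Fin N → R) (α : Fin N → ℕ) :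
    genVandermonde x α = eMatrix x * hMatrix x α := by
  ext i j
  exact pow_eq_sum_eMatrix_mul x i (α j)

theorem hfun_zero (x : Fin N → R) : hfun x 0 = 1 := by
  rw [← coeff_prod_mk_pow, PowerSeries.coeff_zero_eq_constantCoeff_apply, map_prod]
  simp

theorem det_hMatrix_val (x : Fin N → R) : (hMatrix x Fin.val).det = 1 := by
  rw [det_of_isUpperTriangular]
  · simp [hMatrix, hfun_zero]
  · intro r j hjr
    exact if_neg (not_le.2 hjr)

theorem det_eMatrix (x : Fin N → R) : (eMatrix x).det = (vandermonde x).det := by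
  have h : vandermonde x = eMatrix x * hMatrix x Fin.val :=
    genVandermonde_eq_eMatrix_mul_hMatrix x Fin.val
  rw [h, det_mul, det_hMatrix_val, mul_one]

theorem det_hMatrix_rev_add (x : Fin N → R) (lam : Fin N → ℕ) :
    (hMatrix x (fun j => lam j.rev + j)).det = schurAt x lam := by
  rw [schurAt, ← det_transpose, ← det_submatrix_equiv_self Fin.revPerm]
  congr 1
  ext i j
  have hcond : N - (j + 1) ≤ lam i + (N - (i + 1)) ↔ i ≤ lam i + j := by omega
  have hexp : lam i + (N - (i + 1)) - (N - (j + 1)) = lam i + j - i := by omega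
  simp only [hMatrix, submatrix_apply, transpose_apply, of_apply, Fin.revPerm_apply, Fin.rev_rev,
    Fin.val_rev, hcond, hexp]

theorem det_genVandermonde_rev_add (x : Fin N → R) (lam : Fin N → ℕ) :
    (genVandermonde x (fun j : Fin N => lam j.rev + j)).det =
      schurAt x lam * (vandermonde x).det := by
  rw [genVandermonde_eq_eMatrix_mul_hMatrix, det_mul, det_eMatrix, det_hMatrix_rev_add, mul_comm]

end JacobiTrudi

section CauchyBinet

open Finset

variable {R : Type*} [CommRing R] {N : ℕ} {ι : Type*}

theorem Matrix.det_mul_eq_sum_prod_mul_det_submatrix [Fintype ι] [DecidableEq ι]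
    (B : Matrix (Fin N) ι R) (C : Matrix ι (Fin N) R) :
    (B * C).det = ∑ f : Fin N → ι, (∏ i, B i (f i)) * (C.submatrix f id).det := by
  have hrows : B * C = of fun i => ∑ j, B i j • C j := by
    ext i k
    simp [mul_apply, Finset.sum_apply]
  change detRowAlternating (B * C) = _
  rw [hrows]
  refine (detRowAlternating.toMultilinearMap.map_sum (fun i j => B i j • C j)).trans ?_
  exact sum_congr rfl fun f _ =>
    detRowAlternating.toMultilinearMap.map_smul_univ (fun i => B i (f i)) (fun i => C (f i))

theorem Finset.sum_injective_eq_sum_orderEmbOfFin_comp_perm [Fintype ι] [LinearOrder ι]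
    {M : Type*} [AddCommMonoid M] (g : (Fin N → ι) → M) :
    ∑ f ∈ univ.filter Function.Injective, g f =
      ∑ s : {s : Finset ι // s.card = N}, ∑ σ : Equiv.Perm (Fin N),
        g (s.1.orderEmbOfFin s.2 ∘ σ) := by
  rw [← Fintype.sum_prod_type']
  symm
  refine sum_bij (fun sσ _ => sσ.1.1.orderEmbOfFin sσ.1.2 ∘ sσ.2) ?_ ?_ ?_ fun _ _ => rfl
  · rintro ⟨s, σ⟩ -
    simpa using (s.1.orderEmbOfFin s.2).injective.comp σ.injective
  · rintro ⟨⟨s, hs⟩, σ⟩ - ⟨⟨t, ht⟩, τ⟩ - h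
    have hst : s = t := by
      simpa [Set.range_comp, σ.range_eq_univ, τ.range_eq_univ] using congrArg Set.range h
    subst hst
    have hστ : σ = τ := Equiv.ext fun i => (s.orderEmbOfFin hs).injective (congrFun h i)
    rw [hστ]
  · intro f hf
    have hinj : Function.Injective f := (mem_filter.1 hf).2
    have hs : (univ.image f).card = N := by simp [card_image_of_injective _ hinj]
    refine ⟨(⟨univ.image f, hs⟩, (Tuple.sort f)⁻¹), mem_univ _, ?_⟩
    have hsorted : f ∘ Tuple.sort f = (univ.image f).orderEmbOfFin hs :=
      orderEmbOfFin_unique hs (fun i => mem_image_of_mem f (mem_univ _))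
        ((Tuple.monotone_sort f).strictMono_of_injective (hinj.comp (Tuple.sort f).injective))
    ext i
    simp [← hsorted]

theorem Matrix.sum_perm_prod_mul_det_submatrix (B : Matrix (Fin N) ι R) (C : Matrix ι (Fin N) R)
    (e : Fin N → ι) :
    ∑ σ : Equiv.Perm (Fin N), (∏ i, B i (e (σ i))) * (C.submatrix (e ∘ σ) id).det =
      (B.submatrix id e).det * (C.submatrix e id).det := by
  have hperm (σ : Equiv.Perm (Fin N)) :
      C.submatrix (e ∘ σ) id = (C.submatrix e id).submatrix σ id := rfl
  simp_rw [hperm, det_permute, ← det_transpose (B.submatrix id e), det_apply', sum_mul]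
  refine sum_congr rfl fun σ _ => ?_
  simp only [transpose_apply, submatrix_apply, id_eq]
  ring

theorem Matrix.det_mul_eq_sum_orderEmbOfFin [Fintype ι] [LinearOrder ι] (B : Matrix (Fin N) ι R)
    (C : Matrix ι (Fin N) R) :
    (B * C).det = ∑ s : {s : Finset ι // s.card = N},
      (B.submatrix id (s.1.orderEmbOfFin s.2)).det *
        (C.submatrix (s.1.orderEmbOfFin s.2) id).det := by
  classical
  have hnoninj : ∀ f ∈ (univ : Finset (Fin N → ι)),
      (∏ i, B i (f i)) * (C.submatrix f id).det ≠ 0 → Function.Injective f := by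
    intro f _ hf i j hij
    by_contra hne
    exact hf (by rw [det_zero_of_row_eq hne (by ext k; simp [hij]), mul_zero])
  rw [det_mul_eq_sum_prod_mul_det_submatrix, ← sum_filter_of_ne hnoninj,
    sum_injective_eq_sum_orderEmbOfFin_comp_perm]
  exact sum_congr rfl fun s _ => sum_perm_prod_mul_det_submatrix B C _

end CauchyBinet

section RankOne

open Finset

variable {R : Type*} [CommRing R] {N : ℕ}

theorem vdm_mul_vdm (x y : Fin N → R) :
    vdm x * vdm y = (vandermonde x).det * (vandermonde y).det := by
  set ε : R := ∏ i : Fin N, ∏ _j ∈ Ioi i, (-1 : R)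
  have hsign (z : Fin N → R) : vdm z = ε * (vandermonde z).det := by
    rw [vdm, det_vandermonde, ← prod_mul_distrib]
    refine prod_congr rfl fun i _ => ?_
    rw [← prod_mul_distrib]
    exact prod_congr rfl fun j _ => by ring
  have hε : ε * ε = 1 := by
    simp only [ε, ← prod_mul_distrib, neg_one_mul, neg_neg, prod_const_one]
  rw [hsign x, hsign y]
  linear_combination (vandermonde x).det * (vandermonde y).det * hε

theorem StrictMono.val_le_apply {ν : Fin N → ℕ} (hν : StrictMono ν) (i : Fin N) :
    (i : ℕ) ≤ ν i := by
  have hcard := card_le_card_of_injOn ν (s := Iic i) (t := range (ν i + 1))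
    (fun j hj => mem_range.2 (Nat.lt_succ_of_le (hν.monotone (mem_Iic.1 hj)))) hν.injective.injOn
  simpa using hcard

theorem det_genVandermonde_of_strictMono (x : Fin N → R) {ν : Fin N → ℕ} (hν : StrictMono ν) :
    (genVandermonde x ν).det = schurAt x (fun i => ν i.rev - i.rev) * (vandermonde x).det := by
  rw [← det_genVandermonde_rev_add]
  congr 2
  ext j
  simp [Nat.sub_add_cancel (hν.val_le_apply j)]

theorem Finset.getD_map_sort {α β : Type*} [LinearOrder α] (s : Finset α) {k : ℕ}
    (hs : s.card = k) (f : α → β) (d : β) (i : Fin k) :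
    ((s.sort (· ≤ ·)).map f).getD i d = f (s.orderEmbOfFin hs i) := by
  rw [List.getD_eq_getElem _ _ (by simp [hs]), List.getElem_map, orderEmbOfFin_apply,
    Fin.getElem_fin]

end RankOne

theorem det_sum_hadamardPowers_rank_one_general {F : Type*} [Field F] (N m : ℕ) (n : Fin m → ℕ)
    (hn : StrictMono n) (c : Fin m → F) (u v : Fin N → F) :
    Matrix.det (Matrix.of fun i k : Fin N => ∑ j : Fin m, c j * (u i * v k) ^ n j) =
      vdm u * vdm v *
        ∑ s ∈ (Finset.univ : Finset (Fin m)).powersetCard N,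
          schurAt u (fun i => ((s.sort (· ≤ ·)).map n).getD (i.rev : ℕ) 0 - (i.rev : ℕ)) *
          schurAt v (fun i => ((s.sort (· ≤ ·)).map n).getD (i.rev : ℕ) 0 - (i.rev : ℕ)) *
          ∏ j ∈ s, c j := by
  set C : Matrix (Fin m) (Fin N) F := of fun j k => c j * v k ^ n j
  have hfactor : (of fun i k : Fin N => ∑ j : Fin m, c j * (u i * v k) ^ n j) =
      genVandermonde u n * C := by
    ext i k
    simp only [of_apply, mul_apply, genVandermonde, C, mul_pow]
    exact Finset.sum_congr rfl fun j _ => by ring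
  rw [hfactor, det_mul_eq_sum_orderEmbOfFin, vdm_mul_vdm, Finset.mul_sum,
    Finset.sum_subtype _ (p := fun s : Finset (Fin m) => s.card = N) (by simp)]
  refine Finset.sum_congr rfl fun s _ => ?_
  set e := s.1.orderEmbOfFin s.2
  have hν : StrictMono (n ∘ e) := hn.comp e.strictMono
  have hC : C.submatrix e id = of fun l k => c (e l) * (genVandermonde v (n ∘ e))ᵀ l k := rfl
  have hc : ∏ l, c (e l) = ∏ j ∈ s.1, c j := by
    rw [← Finset.map_orderEmbOfFin_univ s.1 s.2, Finset.prod_map]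
    rfl
  simp only [Finset.getD_map_sort s.1 s.2]
  have hB : (genVandermonde u n).submatrix id e = genVandermonde u (n ∘ e) := rfl
  rw [hB, hC, det_mul_column, det_transpose, hc, det_genVandermonde_of_strictMono u hν,
    det_genVandermonde_of_strictMono v hν]
  simp only [Function.comp_apply]
  ring

/-- Cauchy–Binet type expansion of the determinant of a sum of Hadamard powers of a
rank-one matrix, in terms of Schur polynomials. -/
theorem det_sum_hadamardPowers_rank_one {F : Type*} [Field F] (N m : ℕ) (hN : 1 ≤ N)
    (hm : N ≤ m) (n : Fin m → ℕ) (hn : StrictMono n) (c : Fin m → F) (u v : Fin N → F) :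
    Matrix.det (Matrix.of fun i k : Fin N => ∑ j : Fin m, c j * (u i * v k) ^ n j) =
      vdm u * vdm v *
        ∑ s ∈ (Finset.univ : Finset (Fin m)).powersetCard N,
          schurAt u (fun i => ((s.sort (· ≤ ·)).map n).getD (i.rev : ℕ) 0 - (i.rev : ℕ)) *
          schurAt v (fun i => ((s.sort (· ≤ ·)).map n).getD (i.rev : ℕ) 0 - (i.rev : ℕ)) *
          ∏ j ∈ s, c j :=
  det_sum_hadamardPowers_rank_one_general N m n hn c u v
end

section
/- Let M ≥ N ≥ 1 and let μ(M,N,j) be the hook partition (M-N+1, 1,...,1, 0,...,0) with N-j-1 ones and j zeros, for 0 ≤ j < N. Then the Schur polynomial s_{μ(M,N,j)} evaluated at (1,1,...,1) (N ones) equals binom(M, j) · binom(M-j-1, N-j-1). -/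
open Matrix BigOperators

/-!
Jacobi–Trudi with `h_k(1^N) = C(N + k - 1, k)` and `ℓ = λ + δ` gives the matrix
`(C(ℓ_i + k, N - 1))`. Vandermonde's convolution splits off a unitriangular Pascal matrix,
leaving `(C(ℓ_i, N - 1 - k))`, which after reversing rows and columns is a Vandermonde matrix
in `ℓ` written in the basis of falling factorials; hence
`s_λ(1^N) ∏_{k<N} k! = ∏_{i<j} (ℓ_i - ℓ_j)`. For the hook, `{ℓ_i} = {M} ∪ {0, …, N - 1} \ {j}`,
so the product of differences is
`M^{(N)} ∏_{k<N} k! / ((M - j) j! (N - 1 - j)!) = C(M, j) C(M - j - 1, N - j - 1) ∏ k!`.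
-/

open Finset
open scoped Nat

section

variable {R : Type*} [CommRing R]

theorem card_piAntidiag_univ {ι : Type*} [Fintype ι] [DecidableEq ι] (k : ℕ) :
    #(piAntidiag (univ : Finset ι) k) = (Fintype.card ι + k - 1).choose k := by
  rw [← map_sym_eq_piAntidiag, card_map, sym_univ, card_univ, Sym.card_sym_eq_choose]

theorem hfun_one (N k : ℕ) :
    hfun (fun _ : Fin N => (1 : R)) k = ((N + k - 1).choose k : ℕ) := by
  simp only [hfun, one_pow, prod_const_one, sum_const, nsmul_one]
  have hcard := card_piAntidiag_univ (ι := Fin N) k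
  rw [Fintype.card_fin] at hcard
  rw [← hcard]
  congr 1
  have le_of_mem {f : Fin N → ℕ} (hf : f ∈ piAntidiag univ k) (i : Fin N) : f i ≤ k :=
    (mem_piAntidiag.mp hf).1 ▸ single_le_sum (by simp) (mem_univ i)
  refine card_nbij' (fun d i => d i) (fun f i => ⟨min (f i) k, by omega⟩) ?_ ?_ ?_ ?_
  · intro d hd
    simpa using hd
  · intro f hf
    simpa [le_of_mem hf] using (mem_piAntidiag.mp hf).1
  · intro d _
    funext i
    exact Fin.ext (min_eq_left (Nat.le_of_lt_succ (d i).isLt))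
  · intro f hf
    funext i
    simp [le_of_mem hf]

def addStaircase {N : ℕ} (lam : Fin N → ℕ) : Fin N → ℕ := fun i => lam i + (N - 1 - i)

theorem addStaircase_strictAnti {N : ℕ} {lam : Fin N → ℕ} (hlam : Antitone lam) :
    StrictAnti (addStaircase lam) := by
  intro a b hab
  have := hlam hab.le
  have : (a : ℕ) < b := hab
  have := b.isLt
  simp only [addStaircase]
  omega

theorem schurAt_one_eq_det_choose (N : ℕ) (lam : Fin N → ℕ) :
    schurAt (fun _ : Fin N => (1 : R)) lam =
      det (of fun i k : Fin N => (((addStaircase lam i + k).choose (N - 1) : ℕ) : R)) := by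
  unfold schurAt
  congr 1
  ext i k
  simp only [of_apply, addStaircase]
  have := i.isLt
  split_ifs with h
  · rw [hfun_one, show N + (lam i + k - i) - 1 = (lam i + k - i) + (N - 1) by omega,
      Nat.choose_symm_add]
    congr 2
    omega
  · rw [Nat.choose_eq_zero_of_lt (by omega), Nat.cast_zero]

theorem det_choose_add_eq_det_choose (N : ℕ) (x : Fin N → ℕ) :
    det (of fun i k : Fin N => (((x i + k).choose (N - 1) : ℕ) : R)) =
      det (of fun i k : Fin N => (((x i).choose (N - 1 - k) : ℕ) : R)) := by
  have pascal_det : det (of fun k l : Fin N => (((l : ℕ).choose k : ℕ) : R)) = 1 := by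
    rw [det_of_isUpperTriangular]
    · simp
    · intro k l hkl
      simp [Nat.choose_eq_zero_of_lt (show (l : ℕ) < k from hkl)]
  have vandermonde_conv : (of fun i l : Fin N => (((x i + l).choose (N - 1) : ℕ) : R)) =
      (of fun i k : Fin N => (((x i).choose (N - 1 - k) : ℕ) : R)) *
        of fun k l : Fin N => (((l : ℕ).choose k : ℕ) : R) := by
    ext i l
    have hN : N - 1 + 1 = N := by have := i.isLt; omega
    rw [mul_apply, of_apply, add_comm, Nat.add_choose_eq,
      Nat.sum_antidiagonal_eq_sum_range_succ (fun a b => (l : ℕ).choose a * (x i).choose b),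
      Nat.succ_eq_add_one, hN,
      ← Fin.sum_univ_eq_sum_range (fun k => (l : ℕ).choose k * (x i).choose (N - 1 - k))]
    push_cast
    exact sum_congr rfl fun k _ => mul_comm _ _
  rw [vandermonde_conv, det_mul, pascal_det, mul_one]

theorem det_choose_sub_eq_det_choose_rev (N : ℕ) (x : Fin N → ℕ) :
    det (of fun i k : Fin N => (((x i).choose (N - 1 - k) : ℕ) : R)) =
      det (of fun i k : Fin N => (((x (Fin.rev i)).choose k : ℕ) : R)) := by
  rw [← det_submatrix_equiv_self Fin.revPerm]
  congr 1
  ext i k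
  simp only [submatrix_apply, of_apply, Fin.revPerm_apply, Fin.val_rev]
  congr 3
  omega

theorem det_choose_mul_prod_factorial [IsDomain R] (N : ℕ) (x : Fin N → ℕ) :
    det (of fun i k : Fin N => (((x i).choose k : ℕ) : R)) * ∏ k : Fin N, ((k : ℕ)! : R) =
      ∏ i : Fin N, ∏ j ∈ Ioi i, ((x j : R) - x i) := by
  rw [← det_vandermonde, det_eval_matrixOfPolynomials_eq_det_vandermonde _
    (fun k => descPochhammer R k) (fun k => descPochhammer_natDegree R k)
    (fun k => monic_descPochhammer R k), mul_comm, ← det_mul_row]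
  congr 1
  ext i k
  simp [descPochhammer_eval_eq_descFactorial, Nat.descFactorial_eq_factorial_mul_choose]

def vandermondeProd (S : Finset ℕ) : ℕ := ∏ s ∈ S, ∏ t ∈ S with t < s, (s - t)

theorem prod_Ioi_sub_eq_vandermondeProd {N : ℕ} {v : Fin N → ℕ} (hv : StrictMono v) :
    ∏ i : Fin N, ∏ j ∈ Ioi i, ((v j : R) - v i) = vandermondeProd (univ.image v) := by
  have filter_image_lt (j : Fin N) : {t ∈ univ.image v | t < v j} = (Iio j).image v := by
    ext t
    simp only [mem_filter, mem_image, mem_univ, true_and, mem_Iio]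
    constructor
    · rintro ⟨⟨i, rfl⟩, h⟩
      exact ⟨i, hv.lt_iff_lt.mp h, rfl⟩
    · rintro ⟨i, h, rfl⟩
      exact ⟨⟨i, rfl⟩, hv h⟩
  rw [vandermondeProd, Nat.cast_prod, prod_image hv.injective.injOn]
  simp_rw [filter_image_lt, Nat.cast_prod, prod_image hv.injective.injOn]
  rw [prod_comm' (t' := univ) (s' := Iio) (by simp)]
  refine prod_congr rfl fun j _ => prod_congr rfl fun i hi => ?_
  rw [Nat.cast_sub (hv (mem_Iio.mp hi)).le]

theorem schurAt_one_mul_prod_factorial [IsDomain R] {N : ℕ} {lam : Fin N → ℕ}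
    (hlam : Antitone lam) :
    schurAt (fun _ : Fin N => (1 : R)) lam * ∏ k ∈ range N, (k ! : R) =
      vandermondeProd (univ.image (addStaircase lam)) := by
  have hmono : StrictMono (addStaircase lam ∘ Fin.rev) :=
    (addStaircase_strictAnti hlam).comp Fin.rev_strictAnti
  rw [schurAt_one_eq_det_choose, det_choose_add_eq_det_choose, det_choose_sub_eq_det_choose_rev,
    ← Fin.prod_univ_eq_prod_range, det_choose_mul_prod_factorial]
  refine (prod_Ioi_sub_eq_vandermondeProd hmono).trans ?_
  rw [← image_image, image_univ_of_surjective Fin.rev_surjective]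

end

theorem vandermondeProd_insert {a : ℕ} {S : Finset ℕ} (ha : a ∉ S) :
    vandermondeProd (insert a S) =
      (∏ t ∈ S with t < a, (a - t)) * (∏ s ∈ S with a < s, (s - a)) * vandermondeProd S := by
  have inner (s : ℕ) (_ : s ∈ S) : ∏ t ∈ insert a S with t < s, (s - t) =
      (if a < s then s - a else 1) * ∏ t ∈ S with t < s, (s - t) := by
    rw [filter_insert]
    split_ifs with h
    · rw [prod_insert (by simp [ha])]
    · rw [one_mul]
  rw [vandermondeProd, prod_insert ha, filter_insert, if_neg (lt_irrefl a), prod_congr rfl inner,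
    prod_mul_distrib, prod_ite, prod_const_one, mul_one, mul_assoc]
  rfl

theorem prod_range_sub_eq_factorial (n : ℕ) : ∏ t ∈ range n, (n - t) = n ! := by
  rw [← Nat.descFactorial_eq_prod_range, Nat.descFactorial_self]

theorem vandermondeProd_range (n : ℕ) : vandermondeProd (range n) = ∏ k ∈ range n, k ! := by
  induction n with
  | zero => rfl
  | succ n ih =>
    have below : {t ∈ range n | t < n} = range n := filter_true_of_mem fun t ht => mem_range.mp ht
    have above : {t ∈ range n | n < t} = ∅ :=
      filter_false_of_mem fun t ht => by simp at ht; omega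
    rw [range_add_one, vandermondeProd_insert notMem_range_self, below, above, prod_empty,
      prod_range_sub_eq_factorial, ih, prod_insert notMem_range_self, mul_one]

theorem vandermondeProd_range_erase_mul {N j : ℕ} (hj : j < N) :
    vandermondeProd ((range N).erase j) * (j ! * (N - 1 - j)!) = ∏ k ∈ range N, k ! := by
  have below : {t ∈ (range N).erase j | t < j} = range j := by
    ext t; simp only [mem_filter, mem_erase, mem_range]; omega
  have above : {s ∈ (range N).erase j | j < s} = Ico (j + 1) N := by
    ext t; simp only [mem_filter, mem_erase, mem_range, mem_Ico]; omega
  have prod_above : ∏ s ∈ Ico (j + 1) N, (s - j) = (N - 1 - j)! := by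
    rw [prod_Ico_eq_prod_range, ← prod_range_add_one_eq_factorial,
      show N - (j + 1) = N - 1 - j by omega]
    exact prod_congr rfl fun k _ => by omega
  have split_off_j := vandermondeProd_insert (notMem_erase j (range N))
  rw [insert_erase (mem_range.mpr hj), below, above, prod_range_sub_eq_factorial,
    prod_above] at split_off_j
  rw [← vandermondeProd_range, split_off_j]
  ring

theorem descFactorial_eq_choose_mul_choose {M N j : ℕ} (hjN : j < N) (hjM : j < M) :
    M.descFactorial N =
      M.choose j * (M - j - 1).choose (N - j - 1) * ((M - j) * (j ! * (N - 1 - j)!)) := by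
  obtain ⟨m, hm⟩ : ∃ m, M - j = m + 1 := ⟨M - j - 1, by omega⟩
  obtain ⟨n, hn⟩ : ∃ n, N - j = n + 1 := ⟨N - j - 1, by omega⟩
  rw [← Nat.descFactorial_mul_descFactorial hjN.le, show N - 1 - j = N - j - 1 by omega, hm, hn,
    Nat.add_sub_cancel, Nat.add_sub_cancel, Nat.succ_descFactorial_succ,
    Nat.descFactorial_eq_factorial_mul_choose, Nat.descFactorial_eq_factorial_mul_choose]
  ring

theorem vandermondeProd_insert_range_erase {M N j : ℕ} (hMN : N ≤ M) (hj : j < N) :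
    vandermondeProd (insert M ((range N).erase j)) =
      M.choose j * (M - j - 1).choose (N - j - 1) * ∏ k ∈ range N, k ! := by
  have below : {t ∈ (range N).erase j | t < M} = (range N).erase j :=
    filter_true_of_mem fun t ht => by simp at ht; omega
  have above : {s ∈ (range N).erase j | M < s} = ∅ :=
    filter_false_of_mem fun t ht => by simp at ht; omega
  have hpos : 0 < (M - j) * (j ! * (N - 1 - j)!) :=
    Nat.mul_pos (by omega) (by positivity)
  refine Nat.eq_of_mul_eq_mul_right hpos ?_
  calc vandermondeProd (insert M ((range N).erase j)) * ((M - j) * (j ! * (N - 1 - j)!))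
      = ((∏ t ∈ (range N).erase j, (M - t)) * (M - j)) *
          (vandermondeProd ((range N).erase j) * (j ! * (N - 1 - j)!)) := by
        rw [vandermondeProd_insert (by simp; omega), below, above, prod_empty]
        ring
    _ = M.descFactorial N * ∏ k ∈ range N, k ! := by
        rw [prod_erase_mul _ _ (mem_range.mpr hj), ← Nat.descFactorial_eq_prod_range,
          vandermondeProd_range_erase_mul hj]
    _ = _ := by
        rw [descFactorial_eq_choose_mul_choose hj (by omega)]
        ring

theorem hookP_antitone (M N j : ℕ) : Antitone (hookP M N j) := by
  intro a b hab
  have : (a : ℕ) ≤ b := hab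
  simp only [hookP]
  split_ifs <;> omega

theorem image_addStaircase_hookP {M N j : ℕ} (hMN : N ≤ M) (hj : j < N) :
    univ.image (addStaircase (hookP M N j)) = insert M ((range N).erase j) := by
  refine eq_of_subset_of_card_le ?_ ?_
  · intro t ht
    obtain ⟨i, -, rfl⟩ := mem_image.mp ht
    have := i.isLt
    simp only [addStaircase, hookP, mem_insert, mem_erase, mem_range]
    split_ifs <;> omega
  · rw [card_image_of_injective _ (addStaircase_strictAnti (hookP_antitone M N j)).injective,
      card_insert_of_notMem (by simp; omega), card_erase_of_mem (by simpa using hj), card_range,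
      card_univ, Fintype.card_fin]
    omega

theorem schur_hook_ones_general (M N j : ℕ) (hMN : N ≤ M) (hj : j < N) :
    schurAt (fun _ : Fin N => (1 : ℚ)) (hookP M N j) =
      (M.choose j : ℚ) * ((M - j - 1).choose (N - j - 1) : ℚ) := by
  have h := schurAt_one_mul_prod_factorial (R := ℚ) (hookP_antitone M N j)
  rw [image_addStaircase_hookP hMN hj, vandermondeProd_insert_range_erase hMN hj] at h
  push_cast at h
  exact mul_right_cancel₀ (by positivity) h

/-- The Schur polynomial of the hook partition `μ(M,N,j)` evaluated at `N` ones equals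
`binom(M,j) * binom(M-j-1, N-j-1)`. -/
theorem schur_hook_ones (M N j : ℕ) (hN : 1 ≤ N) (hMN : N ≤ M) (hj : j < N) :
    schurAt (fun _ : Fin N => (1 : ℚ)) (hookP M N j) =
      (M.choose j : ℚ) * ((M - j - 1).choose (N - j - 1) : ℚ) :=
  schur_hook_ones_general M N j hMN hj
end

section
/- Let F be a field, N ≥ 1, M ≥ N integers, c_0,...,c_{N-1} nonzero elements of F, and p_t(z) := t(c_0 + c_1 z + ... + c_{N-1} z^{N-1}) - z^M. Then for all u, v ∈ F^N, det p_t[u v^T] = t^{N-1} Δ_N(u) Δ_N(v) (∏_{j=0}^{N-1} c_j) · (t - Σ_{j=0}^{N-1} s_{μ(M,N,j)}(u) s_{μ(M,N,j)}(v)/c_j), where p_t[A] denotes entrywise application of p_t to A. -/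
open Matrix BigOperators

set_option linter.unusedSectionVars false

namespace DetPencilAux

variable {F : Type*} [CommRing F]

/-- Elementary symmetric polynomial as a function of a point. -/
def ee {N : ℕ} (x : Fin N → F) (k : ℕ) : F :=
  ∑ S ∈ Finset.powersetCard k Finset.univ, ∏ i ∈ S, x i

lemma ee_eq_esymm {N : ℕ} (x : Fin N → F) (k : ℕ) :
    ee x k = (Multiset.map x Finset.univ.val).esymm k :=
  (Finset.esymm_map_val x Finset.univ k).symm

lemma ee_zero {N : ℕ} (x : Fin N → F) : ee x 0 = 1 := by
  simp [ee]

lemma ee_eq_zero {N : ℕ} (x : Fin N → F) {k : ℕ} (h : N < k) : ee x k = 0 := by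
  rw [ee, Finset.powersetCard_eq_empty.2 (by simpa using h), Finset.sum_empty]

lemma mesymm_cons (a : F) (s : Multiset F) (k : ℕ) :
    (a ::ₘ s).esymm (k + 1) = s.esymm (k + 1) + a * s.esymm k := by
  have h2 : (Multiset.map (Multiset.prod ∘ Multiset.cons a) (Multiset.powersetCard k s)).sum
      = a * s.esymm k := by
    rw [show Multiset.prod ∘ Multiset.cons a = fun t => a * t.prod from
      funext fun t => by simp, Multiset.sum_map_mul_left]
    rfl
  rw [Multiset.esymm, Multiset.powersetCard_cons, Multiset.map_add, Multiset.sum_add,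
    Multiset.map_map, h2]
  rfl

lemma univ_val_map_cons {n : ℕ} (a : F) (y : Fin n → F) :
    Multiset.map (Fin.cons a y) (Finset.univ : Finset (Fin (n+1))).val
      = a ::ₘ Multiset.map y Finset.univ.val := by
  rw [Fin.univ_succ, Finset.cons_val, Multiset.map_cons, Fin.cons_zero, Finset.map_val,
    Multiset.map_map]
  congr 1

lemma ee_cons {n : ℕ} (a : F) (y : Fin n → F) (k : ℕ) :
    ee (Fin.cons a y) (k + 1) = ee y (k + 1) + a * ee y k := by
  rw [ee_eq_esymm, ee_eq_esymm, ee_eq_esymm, univ_val_map_cons, mesymm_cons]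

/-- Vieta: evaluated form. -/
lemma prod_sub_eq {n : ℕ} (z : Fin n → F) (y : F) :
    ∏ l, (y - z l) = ∑ k ∈ Finset.range (n + 1), (-1) ^ k * ee z k * y ^ (n - k) := by
  have h := congrArg (Polynomial.eval y)
    (Multiset.prod_X_sub_X_eq_sum_esymm (Multiset.map z Finset.univ.val))
  simp only [Polynomial.eval_multiset_prod, Multiset.map_map, Function.comp_def,
    Polynomial.eval_sub, Polynomial.eval_X, Polynomial.eval_C, Polynomial.eval_finset_sum,
    Polynomial.eval_mul, Polynomial.eval_pow, Polynomial.eval_one, Polynomial.eval_neg,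
    Multiset.card_map, ← Finset.card_def, Finset.card_univ, Fintype.card_fin] at h
  rw [show (∏ l, (y - z l)) = (Multiset.map (fun t => y - z t) Finset.univ.val).prod from
    Finset.prod_eq_multiset_prod _ _]
  rw [h]
  refine Finset.sum_congr rfl fun k _ => ?_
  rw [ee_eq_esymm, mul_assoc]

lemma hfun_tuple {N : ℕ} (x : Fin N → F) (k : ℕ) :
    hfun x k = ∑ d ∈ Finset.Nat.antidiagonalTuple N k, ∏ i, x i ^ d i := by
  refine Finset.sum_nbij' (fun d => fun i => (d i : ℕ))
    (fun d => fun i => (⟨min (d i) k, by omega⟩ : Fin (k+1))) ?_ ?_ ?_ ?_ ?_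
  · intro d hd
    simp only [Finset.mem_filter, Finset.mem_univ, true_and] at hd
    rw [Finset.Nat.mem_antidiagonalTuple]
    exact hd
  · intro d hd
    rw [Finset.Nat.mem_antidiagonalTuple] at hd
    have hle : ∀ i, d i ≤ k := fun i => hd ▸ Finset.single_le_sum
      (f := fun i => d i) (fun _ _ => Nat.zero_le _) (Finset.mem_univ i)
    simp only [Finset.mem_filter, Finset.mem_univ, true_and]
    calc (∑ i, min (d i) k) = ∑ i, d i := by
          exact Finset.sum_congr rfl fun i _ => Nat.min_eq_left (hle i)
      _ = k := hd
  · intro d _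
    funext i
    exact Fin.ext (by simp [Nat.min_eq_left (Fin.is_le (d i))])
  · intro d hd
    rw [Finset.Nat.mem_antidiagonalTuple] at hd
    have hle : ∀ i, d i ≤ k := fun i => hd ▸ Finset.single_le_sum
      (f := fun i => d i) (fun _ _ => Nat.zero_le _) (Finset.mem_univ i)
    funext i
    simp [Nat.min_eq_left (hle i)]
  · intro d _; rfl

lemma hfun_zero {N : ℕ} (x : Fin N → F) : hfun x 0 = 1 := by
  rw [hfun_tuple]
  rw [Finset.Nat.antidiagonalTuple_zero_right]
  simp

lemma hfun_fin0 (x : Fin 0 → F) (m : ℕ) : hfun x m = if m = 0 then 1 else 0 := by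
  rcases m with _ | m
  · simp [hfun_zero]
  · rw [hfun_tuple, Finset.Nat.antidiagonalTuple_zero_succ]
    simp

lemma map_ee {R : Type*} {S : Type*} [CommRing R] [CommRing S] (φ : R →+* S)
    {N : ℕ} (z : Fin N → R) (k : ℕ) : φ (ee z k) = ee (fun i => φ (z i)) k := by
  simp [ee, map_sum, map_prod]

lemma hfun_cons_succ {n : ℕ} (a : F) (y : Fin n → F) (m : ℕ) :
    hfun (Fin.cons a y) (m + 1) = a * hfun (Fin.cons a y) m + hfun y (m + 1) := by
  rw [hfun_tuple, hfun_tuple, hfun_tuple]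
  rw [← Finset.sum_filter_add_sum_filter_not (Finset.Nat.antidiagonalTuple (n+1) (m+1))
    (fun d => d 0 = 0)]
  have hA : ∑ d ∈ (Finset.Nat.antidiagonalTuple (n+1) (m+1)).filter (fun d => d 0 = 0),
      ∏ i, (Fin.cons a y) i ^ d i = ∑ d ∈ Finset.Nat.antidiagonalTuple n (m+1), ∏ i, y i ^ d i := by
    refine Finset.sum_nbij' (fun d => d ∘ Fin.succ) (fun d => Fin.cons 0 d) ?_ ?_ ?_ ?_ ?_
    · intro d hd
      simp only [Finset.mem_filter, Finset.Nat.mem_antidiagonalTuple] at hd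
      rw [Finset.Nat.mem_antidiagonalTuple]
      have := hd.1
      rw [Fin.sum_univ_succ, hd.2] at this
      simpa using this
    · intro d hd
      rw [Finset.Nat.mem_antidiagonalTuple] at hd
      simp only [Finset.mem_filter, Finset.Nat.mem_antidiagonalTuple]
      constructor
      · rw [Fin.sum_univ_succ]
        simpa using hd
      · simp
    · intro d hd
      simp only [Finset.mem_filter] at hd
      funext i
      refine Fin.cases ?_ ?_ i
      · simp [hd.2]
      · intro j; simp
    · intro d _
      funext i; simp
    · intro d hd
      simp only [Finset.mem_filter] at hd
      rw [Fin.prod_univ_succ, hd.2]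
      simp
  have upd0 : ∀ (d : Fin (n+1) → ℕ) (v : ℕ), Function.update d 0 v 0 = v :=
    fun d v => Function.update_self 0 v d
  have upds : ∀ (d : Fin (n+1) → ℕ) (v : ℕ) (j : Fin n),
      Function.update d 0 v j.succ = d j.succ :=
    fun d v j => Function.update_of_ne (Fin.succ_ne_zero j) _ _
  have hB : ∑ d ∈ (Finset.Nat.antidiagonalTuple (n+1) (m+1)).filter (fun d => ¬ d 0 = 0),
      ∏ i, (Fin.cons a y) i ^ d i
      = a * ∑ d ∈ Finset.Nat.antidiagonalTuple (n+1) m, ∏ i, (Fin.cons a y) i ^ d i := by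
    rw [Finset.mul_sum]
    refine Finset.sum_nbij' (fun d => Function.update d 0 (d 0 - 1))
      (fun d => Function.update d 0 (d 0 + 1)) ?_ ?_ ?_ ?_ ?_
    · intro d hd
      simp only [Finset.mem_filter, Finset.Nat.mem_antidiagonalTuple, Fin.sum_univ_succ] at hd
      simp only [Finset.Nat.mem_antidiagonalTuple, Fin.sum_univ_succ, upd0, upds]
      omega
    · intro d hd
      simp only [Finset.Nat.mem_antidiagonalTuple, Fin.sum_univ_succ] at hd
      simp only [Finset.mem_filter, Finset.Nat.mem_antidiagonalTuple, Fin.sum_univ_succ,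
        upd0, upds]
      omega
    · intro d hd
      simp only [Finset.mem_filter] at hd
      funext i
      rcases eq_or_ne i 0 with rfl | hi
      · simp only [upd0, Function.update_self]
        have : ¬ d 0 = 0 := hd.2
        omega
      · simp [Function.update_of_ne hi]
    · intro d _
      funext i
      rcases eq_or_ne i 0 with rfl | hi
      · simp only [upd0, Function.update_self]
        omega
      · simp [Function.update_of_ne hi]
    · intro d hd
      simp only [Finset.mem_filter] at hd
      simp only [Fin.prod_univ_succ, upd0, upds, Fin.cons_zero]
      rw [← mul_assoc, ← pow_succ']
      congr 2
      have : ¬ d 0 = 0 := hd.2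
      omega
  rw [hA, hB]
  ring

/-- If the alternating e-h convolution identity holds for `y`, then the "deleted variable"
convolution gives powers of `a`. -/
lemma T_of_S {n : ℕ} (a : F) (y : Fin n → F)
    (hS : ∀ m, ∑ k ∈ Finset.range (m+1), (-1 : F)^k * ee y k * hfun y (m-k)
      = if m = 0 then 1 else 0) :
    ∀ m, ∑ k ∈ Finset.range (m+1), (-1 : F)^k * ee y k * hfun (Fin.cons a y) (m-k) = a ^ m := by
  intro m
  induction m with
  | zero => simp [ee_zero, hfun_zero]
  | succ m ih =>
    rw [Finset.sum_range_succ]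
    have hterm : ∀ k ∈ Finset.range (m+1),
        (-1 : F)^k * ee y k * hfun (Fin.cons a y) (m+1-k)
        = a * ((-1 : F)^k * ee y k * hfun (Fin.cons a y) (m-k))
          + (-1 : F)^k * ee y k * hfun y (m+1-k) := by
      intro k hk
      rw [Finset.mem_range] at hk
      have h1 : m + 1 - k = (m - k) + 1 := by omega
      rw [h1, hfun_cons_succ]
      ring
    rw [Finset.sum_congr rfl hterm, Finset.sum_add_distrib, ← Finset.mul_sum, ih]
    have hS' := hS (m+1)
    rw [Finset.sum_range_succ] at hS'
    have hlast : (-1:F)^(m+1) * ee y (m+1) * hfun y (m+1-(m+1))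
        = (-1:F)^(m+1) * ee y (m+1) * hfun (Fin.cons a y) (m+1-(m+1)) := by
      simp [hfun_zero]
    rw [if_neg (Nat.succ_ne_zero m)] at hS'
    calc a * a ^ m + ∑ k ∈ Finset.range (m+1), (-1:F)^k * ee y k * hfun y (m+1-k)
        + (-1:F)^(m+1) * ee y (m+1) * hfun (Fin.cons a y) (m+1-(m+1))
        = a * a ^ m + (∑ k ∈ Finset.range (m+1), (-1:F)^k * ee y k * hfun y (m+1-k)
          + (-1:F)^(m+1) * ee y (m+1) * hfun y (m+1-(m+1))) := by
          rw [← hlast]; ring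
      _ = a * a ^ m + 0 := by rw [hS']
      _ = a ^ (m+1) := by ring

/-- The fundamental identity `∑ (-1)^k e_k h_{n-k} = δ_{n,0}`. -/
lemma key_S : ∀ (N : ℕ) (x : Fin N → F) (m : ℕ),
    ∑ k ∈ Finset.range (m+1), (-1 : F)^k * ee x k * hfun x (m-k)
      = if m = 0 then 1 else 0 := by
  intro N
  induction N with
  | zero =>
    intro x m
    rcases m with _ | m
    · simp [ee_zero, hfun_zero]
    · rw [if_neg (Nat.succ_ne_zero m)]
      refine Finset.sum_eq_zero fun k hk => ?_
      rcases k with _ | k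
      · rw [hfun_fin0, if_neg (show ¬ (m + 1 - 0 = 0) by omega)]; ring
      · rw [ee_eq_zero x (Nat.succ_pos k)]; ring
  | succ n ih =>
    intro x m
    have hx : x = Fin.cons (x 0) (fun i => x i.succ) := by
      funext i; refine Fin.cases rfl (fun j => rfl) i
    set a := x 0
    set y : Fin n → F := fun i => x i.succ with hy
    rcases m with _ | m
    · simp [ee_zero, hfun_zero]
    · rw [if_neg (Nat.succ_ne_zero m), Finset.sum_range_succ']
      have hT := T_of_S a y (ih y)
      have hTm := hT m
      have hTm1 := hT (m+1)
      rw [Finset.sum_range_succ'] at hTm1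
      rw [← hx] at hTm hTm1
      simp only [Nat.succ_sub_succ, Nat.sub_zero, pow_zero, one_mul, ee_zero] at hTm1
      have hterm : ∀ k ∈ Finset.range (m+1),
          (-1:F)^(k+1) * ee x (k+1) * hfun x (m+1-(k+1))
          = (-1:F)^(k+1) * ee y (k+1) * hfun x (m-k)
            + (-(a * ((-1:F)^k * ee y k * hfun x (m-k)))) := by
        intro k hk
        have h1 : m + 1 - (k+1) = m - k := by omega
        rw [h1, hx, ee_cons, ← hx]
        ring
      rw [Finset.sum_congr rfl hterm, Finset.sum_add_distrib]
      have hneg : ∑ k ∈ Finset.range (m+1), (-(a * ((-1:F)^k * ee y k * hfun x (m-k))))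
          = -(a * ∑ k ∈ Finset.range (m+1), (-1:F)^k * ee y k * hfun x (m-k)) := by
        rw [Finset.mul_sum, ← Finset.sum_neg_distrib]
      rw [hneg, hTm]
      simp only [Nat.sub_zero, pow_zero, one_mul, ee_zero]
      linear_combination hTm1

lemma hfun_perm {N : ℕ} (x : Fin N → F) (σ : Equiv.Perm (Fin N)) (k : ℕ) :
    hfun (x ∘ σ) k = hfun x k := by
  rw [hfun_tuple, hfun_tuple]
  refine Finset.sum_nbij' (fun d => d ∘ σ.symm) (fun d => d ∘ σ) ?_ ?_ ?_ ?_ ?_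
  · intro d hd
    rw [Finset.Nat.mem_antidiagonalTuple] at hd ⊢
    rw [← hd]
    exact Equiv.sum_comp σ.symm d
  · intro d hd
    rw [Finset.Nat.mem_antidiagonalTuple] at hd ⊢
    rw [← hd]
    exact Equiv.sum_comp σ d
  · intro d _; funext i; simp
  · intro d _; funext i; simp
  · intro d _
    have := Equiv.prod_comp σ (fun j => x j ^ (d ∘ σ.symm) j)
    rw [← this]
    refine Finset.prod_congr rfl fun i _ => ?_
    simp

lemma hfun_insertNth {n : ℕ} (x : Fin (n+1) → F) (i : Fin (n+1)) (k : ℕ) :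
    hfun (Fin.cons (x i) (x ∘ i.succAbove)) k = hfun x k := by
  set σ : Equiv.Perm (Fin (n+1)) := (finSuccEquiv' i).trans (finSuccEquiv' 0).symm with hσ
  have hfc : Fin.cons (x i) (x ∘ i.succAbove) = x ∘ σ.symm := by
    funext j
    refine Fin.cases ?_ (fun l => ?_) j
    · have : σ.symm 0 = i := by
        simp [hσ, Equiv.symm_trans_apply, finSuccEquiv'_at]
      simp [this]
    · have : σ.symm l.succ = i.succAbove l := by
        have h1 : (finSuccEquiv' (0 : Fin (n+1))) l.succ = some l := by
          rw [← Fin.zero_succAbove l]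
          exact finSuccEquiv'_succAbove 0 l
        simp [hσ, Equiv.symm_trans_apply, h1, finSuccEquiv'_symm_some]
      simp [this, Fin.cons_succ]
  rw [hfc, hfun_perm]

lemma sum_guard {A m : ℕ} (g : ℕ → F) (h0 : ∀ k, A ≤ k → g k = 0) :
    ∑ k ∈ Finset.range A, (if k ≤ m then g k else 0) = ∑ k ∈ Finset.range (m+1), g k := by
  rw [← Finset.sum_filter]
  have hf : (Finset.range A).filter (· ≤ m) = Finset.range (min A (m+1)) := by
    ext k
    simp only [Finset.mem_filter, Finset.mem_range, Finset.mem_range, lt_min_iff]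
    omega
  rw [hf]
  refine Finset.sum_subset ?_ ?_
  · intro k hk
    simp only [Finset.mem_range, lt_min_iff] at hk ⊢
    omega
  · intro k hk hk2
    simp only [Finset.mem_range, lt_min_iff, not_and, not_lt] at hk hk2
    exact h0 k (by omega)

lemma alternant_entry {n : ℕ} (x : Fin (n+1) → F) (i : Fin (n+1)) (m : ℕ) :
    ∑ k : Fin (n+1), (-1 : F)^(k:ℕ) * ee (x ∘ i.succAbove) (k:ℕ)
        * (if (k:ℕ) ≤ m then hfun x (m - (k:ℕ)) else 0) = x i ^ m := by
  rw [Fin.sum_univ_eq_sum_range (fun k => (-1 : F)^k * ee (x ∘ i.succAbove) k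
        * (if k ≤ m then hfun x (m - k) else 0))]
  have h1 : ∀ k ∈ Finset.range (n+1), (-1 : F)^k * ee (x ∘ i.succAbove) k
        * (if k ≤ m then hfun x (m - k) else 0)
      = if k ≤ m then (-1 : F)^k * ee (x ∘ i.succAbove) k * hfun x (m - k) else 0 := by
    intro k _
    split_ifs <;> simp
  rw [Finset.sum_congr rfl h1,
    sum_guard _ (fun k hk => by rw [ee_eq_zero _ (by omega : n < k)]; ring)]
  have := T_of_S (x i) (x ∘ i.succAbove) (key_S n (x ∘ i.succAbove)) m
  rw [← this]
  refine Finset.sum_congr rfl fun k _ => ?_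
  rw [hfun_insertNth]

/-- The matrix with entries `(-1)^k e_k(x minus x_i)`. -/
noncomputable def Emat {n : ℕ} (x : Fin (n+1) → F) : Matrix (Fin (n+1)) (Fin (n+1)) F :=
  Matrix.of fun i k => (-1 : F)^(k:ℕ) * ee (x ∘ i.succAbove) (k:ℕ)

/-- The Jacobi-Trudi style matrix with ascending exponents `q`. -/
def Hmat {n : ℕ} (x : Fin (n+1) → F) (q : Fin (n+1) → ℕ) :
    Matrix (Fin (n+1)) (Fin (n+1)) F :=
  Matrix.of fun k l => if (k:ℕ) ≤ q l then hfun x (q l - (k:ℕ)) else 0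

lemma alternant_factor {n : ℕ} (x : Fin (n+1) → F) (q : Fin (n+1) → ℕ) :
    (Matrix.of fun i l => x i ^ q l) = Emat x * Hmat x q := by
  ext i l
  rw [Matrix.mul_apply]
  exact (alternant_entry x i (q l)).symm

lemma prod_offdiag {n : ℕ} (x : Fin (n+1) → F) :
    ∏ i : Fin (n+1), ∏ l : Fin n, (x i - x (i.succAbove l))
      = vdm x * (Matrix.vandermonde x).det := by
  have h1 : ∀ i : Fin (n+1), ∏ l : Fin n, (x i - x (i.succAbove l))
      = ∏ j ∈ Finset.univ.erase i, (x i - x j) := by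
    intro i
    refine Finset.prod_bij (fun l _ => i.succAbove l) ?_ ?_ ?_ ?_
    · intro l _
      exact Finset.mem_erase.2 ⟨Fin.succAbove_ne i l, Finset.mem_univ _⟩
    · intro l _ l' _ h
      exact Fin.succAbove_right_injective h
    · intro j hj
      obtain ⟨l, hl⟩ := Fin.exists_succAbove_eq (Finset.ne_of_mem_erase hj)
      exact ⟨l, Finset.mem_univ _, hl⟩
    · intro l _; rfl
  rw [Finset.prod_congr rfl (fun i _ => h1 i)]
  have h2 : ∀ i : Fin (n+1), Finset.univ.erase i = Finset.Iio i ∪ Finset.Ioi i := by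
    intro i
    ext j
    simp only [Finset.mem_erase, Finset.mem_univ, and_true, Finset.mem_union,
      Finset.mem_Iio, Finset.mem_Ioi]
    exact ⟨fun h => h.lt_or_gt, fun h => h.elim ne_of_lt ne_of_gt⟩
  rw [Finset.prod_congr rfl (fun i _ => by
    rw [h2 i, Finset.prod_union (Finset.disjoint_left.2 (fun a ha ha2 => by
      simp only [Finset.mem_Iio, Finset.mem_Ioi] at ha ha2
      exact absurd ha2 (not_lt.2 ha.le)))])]
  rw [Finset.prod_mul_distrib]
  have h3 : ∏ i : Fin (n+1), ∏ j ∈ Finset.Iio i, (x i - x j)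
      = (Matrix.vandermonde x).det := by
    rw [Matrix.det_vandermonde]
    rw [Finset.prod_comm' (s := Finset.univ) (t := fun i => Finset.Iio i)
      (t' := Finset.univ) (s' := fun j => Finset.Ioi j) (by
        intro i j
        simp [Finset.mem_Iio, Finset.mem_Ioi])]
  rw [h3, vdm]
  ring

lemma emat_mul_vdm {n : ℕ} (x : Fin (n+1) → F) :
    Emat x * (Matrix.of fun k j : Fin (n+1) => x j ^ (n - (k:ℕ)))
      = Matrix.diagonal (fun i => ∏ l : Fin n, (x i - x (i.succAbove l))) := by
  ext i j
  rw [Matrix.mul_apply]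
  simp only [Emat, Matrix.of_apply]
  rw [Fin.sum_univ_eq_sum_range (fun k => (-1 : F)^k * ee (x ∘ i.succAbove) k
      * x j ^ (n - k)), ← prod_sub_eq (x ∘ i.succAbove) (x j)]
  rcases eq_or_ne i j with rfl | hij
  · rw [Matrix.diagonal_apply_eq]
    rfl
  · rw [Matrix.diagonal_apply_ne _ hij]
    obtain ⟨l, hl⟩ := Fin.exists_succAbove_eq (Ne.symm hij)
    refine Finset.prod_eq_zero (Finset.mem_univ l) ?_
    simp only [Function.comp_apply, hl, sub_self]

lemma det_powmat {n : ℕ} (x : Fin (n+1) → F) :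
    (Matrix.of fun k j : Fin (n+1) => x j ^ (n - (k:ℕ))).det
      = ((Equiv.Perm.sign (Fin.revPerm : Equiv.Perm (Fin (n+1)))) : ℤ)
        * (Matrix.vandermonde x).det := by
  have : (Matrix.of fun k j : Fin (n+1) => x j ^ (n - (k:ℕ)))
      = ((Matrix.vandermonde x).transpose).submatrix Fin.revPerm id := by
    ext k j
    simp only [Matrix.submatrix_apply, Matrix.transpose_apply, Matrix.vandermonde, id_eq]
    rw [Matrix.of_apply, Matrix.of_apply]
    congr 1
    rw [show (Fin.revPerm k : Fin (n+1)) = k.rev from rfl, Fin.val_rev]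
    omega
  rw [this]
  rw [show ((Matrix.vandermonde x).transpose).submatrix (Fin.revPerm : Equiv.Perm (Fin (n+1)))
    id = ((Matrix.vandermonde x).transpose).submatrix (⇑(Fin.revPerm : Equiv.Perm (Fin (n+1))))
    id from rfl, Matrix.det_permute, Matrix.det_transpose]

/-- Generic determinant of `Emat`. -/
lemma detE {n : ℕ} (x : Fin (n+1) → F) :
    (Emat x).det = ((Equiv.Perm.sign (Fin.revPerm : Equiv.Perm (Fin (n+1)))) : ℤ) * vdm x := by
  set sε : ℤ := ((Equiv.Perm.sign (Fin.revPerm : Equiv.Perm (Fin (n+1)))) : ℤ) with hsε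
  have hε2 : sε * sε = 1 := by
    rw [hsε, ← Units.val_mul, Int.units_mul_self, Units.val_one]
  have hgen : (Emat (MvPolynomial.X : Fin (n+1) → MvPolynomial (Fin (n+1)) ℤ)).det
      = (sε : MvPolynomial (Fin (n+1)) ℤ)
        * vdm (MvPolynomial.X : Fin (n+1) → MvPolynomial (Fin (n+1)) ℤ) := by
    set X : Fin (n+1) → MvPolynomial (Fin (n+1)) ℤ := MvPolynomial.X with hX
    have hdet := congrArg Matrix.det (emat_mul_vdm X)
    rw [Matrix.det_mul, det_powmat, Matrix.det_diagonal] at hdet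
    rw [prod_offdiag] at hdet
    have hvd : (Matrix.vandermonde X).det ≠ 0 := by
      rw [hX]
      exact Matrix.det_vandermonde_ne_zero_iff.2 MvPolynomial.X_injective
    have h2 : (((Emat X).det * (sε : MvPolynomial (Fin (n+1)) ℤ)))
        * (Matrix.vandermonde X).det = vdm X * (Matrix.vandermonde X).det := by
      linear_combination hdet
    have h3 := mul_right_cancel₀ hvd h2
    have hc : (sε : MvPolynomial (Fin (n+1)) ℤ) * (sε : MvPolynomial (Fin (n+1)) ℤ) = 1 := by
      rw [← Int.cast_mul, hε2, Int.cast_one]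
    linear_combination (sε : MvPolynomial (Fin (n+1)) ℤ) * h3 - (Emat X).det * hc
  let φ : MvPolynomial (Fin (n+1)) ℤ →+* F := MvPolynomial.eval₂Hom (Int.castRingHom F) x
  have hφX : ∀ j, φ (MvPolynomial.X j) = x j := fun j => MvPolynomial.eval₂Hom_X' _ _ _
  have h1 := congrArg φ hgen
  rw [RingHom.map_det, _root_.map_mul, map_intCast] at h1
  have hE : φ.mapMatrix (Emat (MvPolynomial.X : Fin (n+1) → MvPolynomial (Fin (n+1)) ℤ))
      = Emat x := by
    ext i k
    simp only [RingHom.mapMatrix_apply, Matrix.map_apply, Emat, Matrix.of_apply]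
    rw [_root_.map_mul, map_pow, map_neg, _root_.map_one, map_ee]
    have harg : (fun l => φ ((MvPolynomial.X ∘ i.succAbove) l)) = x ∘ i.succAbove := by
      funext l
      exact hφX _
    rw [harg]
  have hv : φ (vdm (MvPolynomial.X : Fin (n+1) → MvPolynomial (Fin (n+1)) ℤ)) = vdm x := by
    simp only [vdm, map_prod, map_sub]
    refine Finset.prod_congr rfl fun i _ => Finset.prod_congr rfl fun j _ => ?_
    rw [hφX, hφX]
  rw [hE, hv] at h1
  exact h1

lemma cauchy_binet {N : ℕ} (W : Matrix (Fin N) (Fin (N+1)) F)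
    (Z : Matrix (Fin (N+1)) (Fin N) F) :
    (W * Z).det = ∑ m : Fin (N+1),
      (W.submatrix id m.succAbove).det * (Z.submatrix m.succAbove id).det := by
  classical
  have hrow : (W * Z) = Matrix.of (fun i => ∑ m : Fin (N+1), W i m • Z m) := by
    ext i k
    simp [Matrix.mul_apply]
  have h1 : (W * Z).det
      = ∑ r : Fin N → Fin (N+1), (∏ i, W i (r i)) •
          Matrix.detRowAlternating (fun i => Z (r i)) := by
    rw [hrow]
    calc (Matrix.of fun i => ∑ m : Fin (N+1), W i m • Z m).det
        = (Matrix.detRowAlternating (R := F) (n := Fin N)).toMultilinearMap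
            (fun i => ∑ m : Fin (N+1), W i m • Z m) := rfl
      _ = ∑ r : Fin N → Fin (N+1),
            (Matrix.detRowAlternating (R := F) (n := Fin N)).toMultilinearMap
              (fun i => W i (r i) • Z (r i)) :=
          MultilinearMap.map_sum _ _
      _ = ∑ r : Fin N → Fin (N+1), (∏ i, W i (r i)) •
            Matrix.detRowAlternating (fun i => Z (r i)) := by
          refine Finset.sum_congr rfl fun r _ => ?_
          exact (Matrix.detRowAlternating (R := F) (n := Fin N)).toMultilinearMap.map_smul_univ
            (fun i => W i (r i)) (fun i => Z (r i))
  rw [h1]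
  rw [← Finset.sum_filter_add_sum_filter_not Finset.univ (fun r => Function.Injective r)]
  have h2 : ∑ r ∈ Finset.univ.filter (fun r : Fin N → Fin (N+1) => ¬ Function.Injective r),
      (∏ i, W i (r i)) • Matrix.detRowAlternating (fun i => Z (r i)) = 0 := by
    refine Finset.sum_eq_zero fun r hr => ?_
    rw [Finset.mem_filter, Function.not_injective_iff] at hr
    obtain ⟨i, j, hij, hne⟩ := hr.2
    rw [Matrix.detRowAlternating.map_eq_zero_of_eq _ (by rw [hij]) hne, smul_zero]
  rw [h2, add_zero]
  have h3 : ∑ r ∈ Finset.univ.filter (fun r : Fin N → Fin (N+1) => Function.Injective r),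
      (∏ i, W i (r i)) • Matrix.detRowAlternating (fun i => Z (r i))
      = ∑ p : Fin (N+1) × Equiv.Perm (Fin N),
        (∏ i, W i (p.1.succAbove (p.2 i))) •
          Matrix.detRowAlternating (fun i => Z (p.1.succAbove (p.2 i))) := by
    refine (Finset.sum_bij (fun p _ => p.1.succAbove ∘ p.2) ?_ ?_ ?_ ?_).symm
    · intro p _
      simp only [Finset.mem_filter, Finset.mem_univ, true_and]
      exact Fin.succAbove_right_injective.comp p.2.injective
    · intro p _ p' _ h
      replace h : p.1.succAbove ∘ ⇑p.2 = p'.1.succAbove ∘ ⇑p'.2 := h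
      have hmem : ∀ q : Fin (N+1) × Equiv.Perm (Fin N), ∀ b : Fin (N+1),
          b ∈ Set.range (q.1.succAbove ∘ q.2) ↔ b ≠ q.1 := by
        intro q b
        constructor
        · rintro ⟨l, rfl⟩
          exact Fin.succAbove_ne q.1 _
        · intro hb
          obtain ⟨l, hl⟩ := Fin.exists_succAbove_eq hb
          exact ⟨q.2.symm l, by simp [hl]⟩
      have h11 : p.1 = p'.1 := by
        by_contra hne
        have hp : p.1 ∈ Set.range (p'.1.succAbove ∘ p'.2) := (hmem p' p.1).2 hne
        rw [← h] at hp
        exact ((hmem p p.1).1 hp) rfl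
      have h22 : p.2 = p'.2 := by
        apply Equiv.ext
        intro l
        have := congrFun h l
        simp only [Function.comp_apply, h11] at this
        exact Fin.succAbove_right_injective this
      exact Prod.ext h11 h22
    · intro r hr
      rw [Finset.mem_filter] at hr
      have hcard : (Finset.image r Finset.univ)ᶜ.Nonempty := by
        rw [← Finset.card_pos, Finset.card_compl, Finset.card_image_of_injective _ hr.2]
        simp
      obtain ⟨m, hm⟩ := hcard
      rw [Finset.mem_compl] at hm
      have hne : ∀ i, r i ≠ m := by
        intro i h
        exact hm (Finset.mem_image.2 ⟨i, Finset.mem_univ i, h⟩)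
      have hex : ∀ i, ∃ l, m.succAbove l = r i := fun i => Fin.exists_succAbove_eq (hne i)
      choose g hg using hex
      have hginj : Function.Injective g := by
        intro i j hij
        apply hr.2
        rw [← hg i, ← hg j, hij]
      have hgbij : Function.Bijective g := (Finite.injective_iff_bijective).1 hginj
      refine ⟨(m, Equiv.ofBijective g hgbij), Finset.mem_univ _, ?_⟩
      funext i
      exact hg i
    · intro p _
      rfl
  rw [h3, Fintype.sum_prod_type]
  refine Finset.sum_congr rfl fun m _ => ?_
  have h4 : ∀ σ : Equiv.Perm (Fin N),
      Matrix.detRowAlternating (fun i => Z (m.succAbove (σ i)))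
        = (Equiv.Perm.sign σ : ℤ) * (Z.submatrix m.succAbove id).det := by
    intro σ
    have : (fun i => Z (m.succAbove (σ i)))
        = ((Z.submatrix m.succAbove id).submatrix σ id : Matrix (Fin N) (Fin N) F) := by
      ext i k
      rfl
    show ((Z.submatrix m.succAbove id).submatrix σ id : Matrix (Fin N) (Fin N) F).det = _
    exact Matrix.det_permute σ _
  have h5 : ∀ σ : Equiv.Perm (Fin N), (∏ i, W i (m.succAbove (σ i)))
      = ∏ i, (W.submatrix id m.succAbove) i (σ i) := fun σ => rfl
  calc ∑ σ : Equiv.Perm (Fin N), (∏ i, W i (m.succAbove (σ i))) •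
        Matrix.detRowAlternating (fun i => Z (m.succAbove (σ i)))
      = ∑ σ : Equiv.Perm (Fin N), ((Equiv.Perm.sign σ : ℤ) •
          ∏ i, (W.submatrix id m.succAbove) i (σ i)) * (Z.submatrix m.succAbove id).det := by
        refine Finset.sum_congr rfl fun σ _ => ?_
        rw [h4 σ, h5 σ, smul_eq_mul, zsmul_eq_mul]
        ring
    _ = (W.submatrix id m.succAbove).det * (Z.submatrix m.succAbove id).det := by
        rw [← Finset.sum_mul]
        congr 1
        rw [← Matrix.det_transpose (W.submatrix id m.succAbove), Matrix.det_apply]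
        refine Finset.sum_congr rfl fun σ _ => rfl
lemma val_succAbove {n : ℕ} (p : Fin (n+2)) (l : Fin (n+1)) :
    ((p.succAbove l) : ℕ) = if (l:ℕ) < (p:ℕ) then (l:ℕ) else (l:ℕ)+1 := by
  rw [Fin.succAbove]
  rcases lt_or_ge ((l:ℕ)) ((p:ℕ)) with h | h
  · rw [if_pos (by rwa [Fin.lt_def]), if_pos h]
    rfl
  · rw [if_neg (by rw [Fin.lt_def, Fin.coe_castSucc]; omega), if_neg (by omega)]
    rfl

lemma det_Hmat_hook {n : ℕ} (x : Fin (n+1) → F) (M : ℕ) (hM : n+1 ≤ M) (j : Fin (n+1))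
    (q : Fin (n+1) → ℕ)
    (hq : ∀ l : Fin (n+1), q l
      = if (l:ℕ) < (j:ℕ) then (l:ℕ) else if (l:ℕ) < n then (l:ℕ)+1 else M) :
    (Hmat x q).det = schurAt x (hookP M (n+1) (j:ℕ)) := by
  rw [← Matrix.det_submatrix_equiv_self (Fin.revPerm) (Hmat x q)]
  rw [schurAt, ← Matrix.det_transpose]
  congr 1
  ext i k
  simp only [Matrix.submatrix_apply, Matrix.transpose_apply, Matrix.of_apply, Hmat]
  have hrev : ∀ a : Fin (n+1), ((Fin.revPerm a : Fin (n+1)) : ℕ) = n - (a:ℕ) := by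
    intro a
    rw [show (Fin.revPerm a : Fin (n+1)) = a.rev from rfl, Fin.val_rev]
    omega
  have hjn : (j:ℕ) ≤ n := Fin.is_le j
  have hkn : (k:ℕ) ≤ n := Fin.is_le k
  have hin : (i:ℕ) ≤ n := Fin.is_le i
  have hqv : q (Fin.revPerm i) = hookP M (n+1) (j:ℕ) i + (n - (i:ℕ)) := by
    rw [hq, hrev, hookP]
    split_ifs <;> omega
  rw [hqv, hrev]
  have hcond : (n - (k:ℕ) ≤ hookP M (n+1) (j:ℕ) i + (n - (i:ℕ)))
      ↔ ((i:ℕ) ≤ hookP M (n+1) (j:ℕ) i + (k:ℕ)) := by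
    constructor <;> intro h <;> omega
  rw [if_congr hcond rfl rfl]
  split_ifs with h
  · congr 1
    omega
  · rfl

end DetPencilAux

open DetPencilAux in
/-- The Jacobi–Trudi type determinantal identity for the linear pencil
`p_t(z) = t (c_0 + ⋯ + c_{N-1} z^{N-1}) - z^M` applied entrywise to a rank-one matrix. -/
theorem det_pencil_rank_one {F : Type*} [Field F] (N M : ℕ) (hN : 1 ≤ N) (hMN : N ≤ M)
    (c : Fin N → F) (hc : ∀ j, c j ≠ 0) (t : F) (u v : Fin N → F) :
    Matrix.det (Matrix.of fun i k : Fin N =>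
        t * (∑ j : Fin N, c j * (u i * v k) ^ (j : ℕ)) - (u i * v k) ^ M) =
      t ^ (N - 1) * vdm u * vdm v * (∏ j : Fin N, c j) *
        (t - ∑ j : Fin N, schurAt u (hookP M N (j : ℕ)) * schurAt v (hookP M N (j : ℕ)) / c j) := by
  classical
  obtain ⟨n, rfl⟩ : ∃ n, N = n + 1 := ⟨N - 1, by omega⟩
  set ρ : F := ((Equiv.Perm.sign (Fin.revPerm : Equiv.Perm (Fin (n+1))) : ℤ) : F) with hρ
  have hρ2 : ρ * ρ = 1 := by
    rw [hρ, ← Int.cast_mul, ← Units.val_mul, Int.units_mul_self, Units.val_one, Int.cast_one]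
  set W : Matrix (Fin (n+1)) (Fin (n+2)) F :=
    Matrix.of (fun i m => if (m:ℕ) < n+1 then u i ^ (m:ℕ) else u i ^ M) with hW
  set Z : Matrix (Fin (n+2)) (Fin (n+1)) F :=
    Matrix.of (fun m k => if h : (m:ℕ) < n+1 then t * c ⟨(m:ℕ), h⟩ * v k ^ (m:ℕ)
      else -(v k ^ M)) with hZ
  have hWZ : (Matrix.of fun i k : Fin (n+1) =>
      t * (∑ j : Fin (n+1), c j * (u i * v k) ^ (j : ℕ)) - (u i * v k) ^ M) = W * Z := by
    ext i k
    rw [Matrix.mul_apply, Fin.sum_univ_castSucc (n := n+1)]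
    have hlast : W i (Fin.last (n+1)) * Z (Fin.last (n+1)) k = -(u i ^ M * v k ^ M) := by
      rw [hW, hZ]
      simp only [Matrix.of_apply, Fin.val_last]
      rw [if_neg (lt_irrefl _), dif_neg (lt_irrefl _)]
      ring
    have hcast : ∀ j : Fin (n+1), W i (Fin.castSucc j) * Z (Fin.castSucc j) k
        = t * (c j * (u i ^ (j:ℕ) * v k ^ (j:ℕ))) := by
      intro j
      rw [hW, hZ]
      simp only [Matrix.of_apply, Fin.coe_castSucc]
      rw [if_pos (by omega : (j:ℕ) < n+1), dif_pos (by omega : (j:ℕ) < n+1)]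
      rw [show (⟨(j:ℕ), by omega⟩ : Fin (n+1)) = j from Fin.ext rfl]
      ring
    rw [Finset.sum_congr rfl (fun j _ => hcast j), hlast]
    rw [Matrix.of_apply, Finset.mul_sum]
    rw [Finset.sum_congr rfl (fun j _ => by rw [mul_pow (u i) (v k) (j:ℕ)])]
    ring
  rw [hWZ, cauchy_binet, Fin.sum_univ_castSucc (n := n+1)]
  -- the last term
  have hWlast : (W.submatrix id (Fin.last (n+1)).succAbove) = Matrix.vandermonde u := by
    ext i l
    rw [Matrix.submatrix_apply, Fin.succAbove_last, hW]
    simp only [Matrix.of_apply, id_eq, Fin.coe_castSucc, Matrix.vandermonde]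
    rw [if_pos (by omega : (l:ℕ) < n+1)]
  have hZlast : (Z.submatrix (Fin.last (n+1)).succAbove id).det
      = t^(n+1) * (∏ j, c j) * (Matrix.vandermonde v).det := by
    have h1 : (Z.submatrix (Fin.last (n+1)).succAbove id)ᵀ
        = Matrix.of (fun k l => (t * c l) * Matrix.vandermonde v k l) := by
      ext k l
      rw [Matrix.transpose_apply, Matrix.submatrix_apply, Fin.succAbove_last, hZ]
      simp only [Matrix.of_apply, id_eq, Fin.coe_castSucc]
      rw [dif_pos (by omega : (l:ℕ) < n+1)]
      rw [show (⟨(l:ℕ), by omega⟩ : Fin (n+1)) = l from Fin.ext rfl]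
      rfl
    rw [← Matrix.det_transpose, h1, Matrix.det_mul_row, Finset.prod_mul_distrib,
      Finset.prod_const, Finset.card_univ, Fintype.card_fin]
  rw [hWlast, hZlast]
  -- the hook terms
  set Q : Fin (n+1) → Fin (n+1) → ℕ := fun j l =>
    if (((Fin.castSucc j).succAbove l : Fin (n+2)) : ℕ) < n+1
      then (((Fin.castSucc j).succAbove l : Fin (n+2)) : ℕ) else M with hQdef
  have hQ : ∀ j l : Fin (n+1), Q j l
      = if (l:ℕ) < (j:ℕ) then (l:ℕ) else if (l:ℕ) < n then (l:ℕ)+1 else M := by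
    intro j l
    rw [hQdef]
    simp only
    rw [val_succAbove]
    have hl : (l:ℕ) ≤ n := Fin.is_le l
    have hj : (j:ℕ) ≤ n := Fin.is_le j
    rw [show ((Fin.castSucc j : Fin (n+2)) : ℕ) = (j:ℕ) from rfl]
    split_ifs <;> omega
  have hWj : ∀ j : Fin (n+1), (W.submatrix id (Fin.castSucc j).succAbove).det
      = ρ * vdm u * schurAt u (hookP M (n+1) (j:ℕ)) := by
    intro j
    have h1 : W.submatrix id (Fin.castSucc j).succAbove
        = Matrix.of (fun i l => u i ^ (Q j l)) := by
      ext i l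
      rw [Matrix.submatrix_apply, hW]
      simp only [Matrix.of_apply, id_eq, hQdef]
      split_ifs <;> rfl
    rw [h1, alternant_factor u (Q j), Matrix.det_mul, detE,
      det_Hmat_hook u M (by omega) j (Q j) (hQ j), ← hρ]
  have hZj : ∀ j : Fin (n+1), (Z.submatrix (Fin.castSucc j).succAbove id).det
      = (-(t^n * ∏ l : Fin n, c (j.succAbove l))) * (ρ * vdm v
          * schurAt v (hookP M (n+1) (j:ℕ))) := by
    intro j
    set w : Fin (n+1) → F := fun l =>
      if h : (((Fin.castSucc j).succAbove l : Fin (n+2)) : ℕ) < n+1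
        then t * c ⟨(((Fin.castSucc j).succAbove l : Fin (n+2)) : ℕ), h⟩ else -1 with hw
    have h1 : (Z.submatrix (Fin.castSucc j).succAbove id)ᵀ
        = Matrix.of (fun k l => w l * (Matrix.of (fun k l => v k ^ (Q j l))) k l) := by
      ext k l
      rw [Matrix.transpose_apply, Matrix.submatrix_apply, hZ]
      simp only [Matrix.of_apply, id_eq, hw, hQdef]
      by_cases h : (((Fin.castSucc j).succAbove l : Fin (n+2)) : ℕ) < n+1
      · rw [dif_pos h, dif_pos h, if_pos h]
      · rw [dif_neg h, dif_neg h, if_neg h]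
        ring
    have hprod : ∏ l : Fin (n+1), w l = -(t^n * ∏ l : Fin n, c (j.succAbove l)) := by
      rw [Fin.prod_univ_castSucc (n := n)]
      have hwlast : w (Fin.last n) = -1 := by
        rw [hw]
        simp only
        rw [dif_neg]
        rw [val_succAbove]
        have : (j:ℕ) ≤ n := Fin.is_le j
        rw [show ((Fin.castSucc j : Fin (n+2)) : ℕ) = (j:ℕ) from rfl]
        rw [if_neg (by simp [Fin.val_last]; omega)]
        simp [Fin.val_last]
      have hwcast : ∀ l : Fin n, w (Fin.castSucc l) = t * c (j.succAbove l) := by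
        intro l
        rw [hw]
        simp only
        have hsA : (Fin.castSucc j).succAbove (Fin.castSucc l)
            = Fin.castSucc (j.succAbove l) := Fin.castSucc_succAbove_castSucc
        rw [hsA]
        have hlt : ((Fin.castSucc (j.succAbove l) : Fin (n+2)) : ℕ) < n+1 := by
          rw [show ((Fin.castSucc (j.succAbove l) : Fin (n+2)) : ℕ) = ((j.succAbove l : Fin (n+1)) : ℕ) from rfl]
          omega
        rw [dif_pos hlt]
        exact congrArg (fun z => t * c z) (Fin.ext rfl)
      rw [Finset.prod_congr rfl (fun l _ => hwcast l), hwlast, Finset.prod_mul_distrib,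
        Finset.prod_const, Finset.card_univ, Fintype.card_fin]
      ring
    rw [← Matrix.det_transpose, h1, Matrix.det_mul_row, hprod,
      alternant_factor v (Q j), Matrix.det_mul, detE,
      det_Hmat_hook v M (by omega) j (Q j) (hQ j), ← hρ]
  rw [Finset.sum_congr rfl (fun j _ => by rw [hWj j, hZj j])]
  -- final algebra
  have hvv : (Matrix.vandermonde u).det * (Matrix.vandermonde v).det = vdm u * vdm v := by
    rw [Matrix.det_vandermonde u, Matrix.det_vandermonde v, vdm, vdm,
      ← Finset.prod_mul_distrib, ← Finset.prod_mul_distrib]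
    refine Finset.prod_congr rfl fun i _ => ?_
    rw [← Finset.prod_mul_distrib, ← Finset.prod_mul_distrib]
    exact Finset.prod_congr rfl fun j _ => by ring
  have hterm : ∀ j : Fin (n+1),
      (ρ * vdm u * schurAt u (hookP M (n+1) (j:ℕ)))
        * ((-(t^n * ∏ l : Fin n, c (j.succAbove l)))
            * (ρ * vdm v * schurAt v (hookP M (n+1) (j:ℕ))))
      = -(t^n * vdm u * vdm v * (∏ j', c j')
          * (schurAt u (hookP M (n+1) (j:ℕ)) * schurAt v (hookP M (n+1) (j:ℕ)) / c j)) := by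
    intro j
    have hPj : (∏ j', c j') = c j * ∏ l : Fin n, c (j.succAbove l) :=
      Fin.prod_univ_succAbove c j
    have hcj := hc j
    rw [hPj, div_eq_mul_inv]
    have hinv : c j * (c j)⁻¹ = 1 := mul_inv_cancel₀ hcj
    linear_combination (-(t^n * (∏ l : Fin n, c (j.succAbove l)) * vdm u * vdm v
        * schurAt u (hookP M (n+1) (j:ℕ)) * schurAt v (hookP M (n+1) (j:ℕ)))) * hρ2
      + (t^n * (∏ l : Fin n, c (j.succAbove l)) * vdm u * vdm v
        * schurAt u (hookP M (n+1) (j:ℕ)) * schurAt v (hookP M (n+1) (j:ℕ))) * hinv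
  rw [Finset.sum_congr rfl (fun j _ => hterm j)]
  rw [show (n + 1 - 1) = n from rfl]
  rw [Finset.sum_neg_distrib, ← Finset.mul_sum]
  rw [mul_sub, Finset.mul_sum]
  have : (Matrix.vandermonde u).det * (t ^ (n + 1) * (∏ j, c j) * (Matrix.vandermonde v).det)
      = t ^ n * vdm u * vdm v * (∏ j, c j) * t := by
    linear_combination (t ^ (n+1) * (∏ j, c j)) * hvv
  rw [this]
  ring
end

section
/- Let F be a field and A an N × N matrix over F with rows a_1,...,a_N. Then for any M ≥ N, A^{∘M} = Σ_{j=0}^{N-1} D_{M,j}(A) A^{∘j}, where D_{M,j}(A) is the diagonal matrix with i-th diagonal entry (-1)^{N-j-1} s_{μ(M,N,j)}(a_i). -/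
open Matrix BigOperators

/-!
Fix a row `x` of `A` and an entry `y = x k`. The polynomial `P = ∏ i, (1 - x i X)` is the
inverse of the generating series `∑ h_k X^k` of the complete homogeneous symmetric functions of
`x`, and its `N`-th reflection `∏ i, (X - x i)` vanishes at `y`. Reducing `y ^ M` modulo that
reflection, by induction on `M`, gives `y ^ M = ∑_{s < N} c_s y ^ s` with
`c_s = ∑_{r < N - s} [X^r] P · h_{M-s-r}`.

On the other side, the Jacobi–Trudi matrix of the hook `μ(M,N,s)` is block upper triangular with
a unitriangular lower block, and expanding the remaining hook block along its first column (using
`P · ∑ h_k X^k = 1`) shows that its determinant is `(-1)^(N-1-s) c_s`.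
-/

open Finset Polynomial

namespace HadamardPower

variable {R : Type*} [CommRing R]

lemma one_sub_C_mul_X_mul_mk_pow (a : R) :
    (1 - PowerSeries.C a * PowerSeries.X) * PowerSeries.mk (a ^ ·) = 1 := by
  simpa [mul_comm, PowerSeries.rescale_mk] using
    congrArg (PowerSeries.rescale a) (PowerSeries.mk_one_mul_one_sub_eq_one (S := R))

lemma mk_hfun {N : ℕ} (x : Fin N → R) :
    PowerSeries.mk (hfun x) = ∏ i, PowerSeries.mk (x i ^ ·) := by
  classical
  ext k
  rw [PowerSeries.coeff_mk, PowerSeries.coeff_prod, hfun]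
  simp only [PowerSeries.coeff_mk]
  have le_of_sum_eq {d : Fin N → ℕ} (hd : ∑ i, d i = k) (i : Fin N) : d i ≤ k :=
    hd ▸ single_le_sum (fun _ _ => Nat.zero_le _) (mem_univ i)
  refine sum_bij (fun d _ => Finsupp.equivFunOnFinite.symm fun i => (d i : ℕ)) ?_ ?_ ?_ ?_
  · intro d hd
    simpa [mem_finsuppAntidiag] using (mem_filter.mp hd).2
  · intro d₁ _ d₂ _ h
    funext i
    exact Fin.ext (congrArg (· i) (congrArg Finsupp.equivFunOnFinite h))
  · intro l hl
    have hsum : ∑ i, l i = k := by simpa using (mem_finsuppAntidiag.mp hl).1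
    refine ⟨fun i => ⟨l i, Nat.lt_succ_of_le (le_of_sum_eq hsum i)⟩, ?_, ?_⟩
    · simpa using hsum
    · ext i; rfl
  · intro d _
    rfl

lemma hfun_zero {N : ℕ} (x : Fin N → R) : hfun x 0 = 1 := by
  simpa [← PowerSeries.coeff_zero_eq_constantCoeff_apply] using
    congrArg PowerSeries.constantCoeff (mk_hfun x)

noncomputable def revCharPoly {N : ℕ} (x : Fin N → R) : R[X] := ∏ i, (1 - C (x i) * X)

lemma natDegree_prod_one_sub_C_mul_X_le {ι : Type*} (s : Finset ι) (f : ι → R) :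
    (∏ i ∈ s, (1 - C (f i) * X)).natDegree ≤ #s :=
  (natDegree_prod_le _ _).trans <|
    (sum_le_sum fun i _ => show (1 - C (f i) * X).natDegree ≤ 1 by compute_degree!).trans
      (by simp)

lemma natDegree_revCharPoly_le {N : ℕ} (x : Fin N → R) : (revCharPoly x).natDegree ≤ N := by
  simpa [revCharPoly] using natDegree_prod_one_sub_C_mul_X_le univ x

lemma revCharPoly_mul_mk_hfun {N : ℕ} (x : Fin N → R) :
    (revCharPoly x : PowerSeries R) * PowerSeries.mk (hfun x) = 1 := by
  rw [mk_hfun, revCharPoly, ← coeToPowerSeries.ringHom_apply, map_prod, ← prod_mul_distrib]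
  refine prod_eq_one fun i _ => ?_
  simpa using one_sub_C_mul_X_mul_mk_pow (x i)

lemma eval_reflect_revCharPoly {N : ℕ} (x : Fin N → R) (k : Fin N) :
    ((revCharPoly x).reflect N).eval (x k) = 0 := by
  classical
  have hrest := natDegree_prod_one_sub_C_mul_X_le (univ.erase k) x
  rw [card_erase_of_mem (mem_univ k), card_univ, Fintype.card_fin] at hrest
  rw [revCharPoly, ← mul_prod_erase _ _ (mem_univ k),
    show reflect N = reflect (1 + (N - 1)) by congr 1; have := k.pos; omega,
    reflect_mul _ _ (by compute_degree!) hrest]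
  simp [reflect_sub]

lemma sum_range_coeff_mul_eq_zero {φ : PowerSeries R} {h : ℕ → R}
    (hφ : φ * PowerSeries.mk h = 1) {k : ℕ} (hk : k ≠ 0) :
    ∑ r ∈ range (k + 1), PowerSeries.coeff r φ * h (k - r) = 0 := by
  simpa [PowerSeries.coeff_mul, Nat.sum_antidiagonal_eq_sum_range_succ
    (fun i j => PowerSeries.coeff i φ * h j), PowerSeries.coeff_one, hk] using
    congrArg (PowerSeries.coeff k) hφ

lemma eval_reflect_eq_sum {P : R[X]} {N : ℕ} (hP : P.natDegree ≤ N) (y : R) :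
    (P.reflect N).eval y = ∑ i ∈ range (N + 1), P.coeff (N - i) * y ^ i := by
  rw [eval_eq_sum_range' (n := N + 1) (natDegree_reflect_le.trans_lt (by omega))]
  refine sum_congr rfl fun i hi => ?_
  rw [coeff_reflect, revAt_le (by simpa [Nat.lt_succ_iff] using hi)]

/-- The `s`-th coefficient of the remainder of `X ^ M` modulo the reflection of `P`, when
`h` are the coefficients of `1 / P`. -/
def remCoeff (P : R[X]) (h : ℕ → R) (N M s : ℕ) : R :=
  ∑ r ∈ range (N - s), P.coeff r * h (M - s - r)

theorem pow_eq_sum_remCoeff_mul_pow {P : R[X]} {h : ℕ → R} {N : ℕ} (hN : 0 < N)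
    (hP : P.natDegree ≤ N) (hPh : (P : PowerSeries R) * PowerSeries.mk h = 1) {y : R}
    (hy : (P.reflect N).eval y = 0) {M : ℕ} (hM : N ≤ M + 1) :
    y ^ M = ∑ s ∈ range N, remCoeff P h N M s * y ^ s := by
  obtain ⟨n, rfl⟩ : ∃ n, N = n + 1 := ⟨N - 1, by omega⟩
  have antidiag {k : ℕ} (hk : k ≠ 0) : ∑ r ∈ range (k + 1), P.coeff r * h (k - r) = 0 := by
    simpa using sum_range_coeff_mul_eq_zero hPh hk
  have coeff_zero_mul : P.coeff 0 * h 0 = 1 := by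
    simpa using congrArg (PowerSeries.coeff 0) hPh
  induction M, (show n ≤ M by omega) using Nat.le_induction with
  | base =>
    have hterm : ∀ s ∈ range (n + 1), remCoeff P h (n + 1) n s * y ^ s =
        if s = n then y ^ n else 0 := by
      intro s hs
      have hs : s ≤ n := Nat.lt_succ_iff.mp (mem_range.mp hs)
      split_ifs with hsn
      · simp [remCoeff, hsn, coeff_zero_mul]
      · rw [remCoeff, show n + 1 - s = n - s + 1 by omega, antidiag (by omega), zero_mul]
    simp [sum_congr rfl hterm]
  | succ M hnM ih =>
    have remCoeff_last : remCoeff P h (n + 1) M n = P.coeff 0 * h (M - n) := by simp [remCoeff]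
    have remCoeff_succ : ∀ s ∈ range n,
        remCoeff P h (n + 1) (M + 1) (s + 1) * y ^ (s + 1) =
          (remCoeff P h (n + 1) M s - P.coeff (n - s) * h (M - n)) * y ^ (s + 1) := by
      intro s hs
      have hs : s < n := mem_range.mp hs
      rw [remCoeff, remCoeff, show n + 1 - s = n - s + 1 by omega, sum_range_succ,
        show M - s - (n - s) = M - n by omega, show n + 1 - (s + 1) = n - s by omega]
      simp only [Nat.add_sub_add_right, add_sub_cancel_right]
    have remCoeff_zero : remCoeff P h (n + 1) (M + 1) 0 = -(P.coeff (n + 1) * h (M - n)) := by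
      have full := antidiag (k := M + 1) (by omega)
      rw [← sum_range_add_sum_Ico _ (show n + 2 ≤ M + 1 + 1 by omega),
        sum_eq_zero (s := Ico _ _) fun r hr => by
          rw [coeff_eq_zero_of_natDegree_lt (by simp at hr; omega), zero_mul],
        add_zero, sum_range_succ, show M + 1 - (n + 1) = M - n by omega] at full
      rw [remCoeff, Nat.sub_zero]
      linear_combination full
    have root := eval_reflect_eq_sum hP y ▸ hy
    rw [sum_range_succ', sum_range_succ] at root
    rw [pow_succ, ih (by omega), sum_range_succ, sum_range_succ', sum_congr rfl remCoeff_succ,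
      remCoeff_zero, remCoeff_last]
    simp only [Nat.add_sub_add_right, Nat.sub_zero, Nat.sub_self, pow_zero] at root
    have hsum :
        ∑ s ∈ range n, (remCoeff P h (n + 1) M s - P.coeff (n - s) * h (M - n)) * y ^ (s + 1) =
          (∑ s ∈ range n, remCoeff P h (n + 1) M s * y ^ s) * y -
            h (M - n) * ∑ s ∈ range n, P.coeff (n - s) * y ^ (s + 1) := by
      rw [sum_mul, mul_sum, ← sum_sub_distrib]
      exact sum_congr rfl fun _ _ => by ring
    rw [hsum]
    linear_combination h (M - n) * root

/-- The Jacobi–Trudi matrix `(h (λ r + c - r))` of the hook `λ = (m, 1^b)`. -/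
def hookJacobiTrudi (h : ℕ → R) (b m : ℕ) : Matrix (Fin (b + 1)) (Fin (b + 1)) R :=
  Matrix.of fun r c =>
    if (r : ℕ) = 0 then h (m + c) else if (r : ℕ) ≤ c + 1 then h (c + 1 - r) else 0

lemma det_hookJacobiTrudi_succ {h : ℕ → R} (h0 : h 0 = 1) (b m : ℕ) :
    (hookJacobiTrudi h (b + 1) m).det =
      h m * (hookJacobiTrudi h b 1).det - (hookJacobiTrudi h b (m + 1)).det := by
  have minor0 : (hookJacobiTrudi h (b + 1) m).submatrix Fin.succ Fin.succ =
      hookJacobiTrudi h b 1 := by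
    ext r c
    simp only [hookJacobiTrudi, Matrix.submatrix_apply, Matrix.of_apply, Fin.val_succ,
      Nat.add_one_ne_zero, ↓reduceIte]
    split_ifs <;> first | rfl | omega | (congr 1; omega)
  have minor1 : (hookJacobiTrudi h (b + 1) m).submatrix (Fin.succAbove 1) Fin.succ =
      hookJacobiTrudi h b (m + 1) := by
    ext r c
    cases r using Fin.cases with
    | zero => simp [hookJacobiTrudi, Fin.succAbove, add_assoc, add_comm 1]
    | succ r => simp [hookJacobiTrudi, Fin.succAbove]
  rw [Matrix.det_succ_column_zero, Fin.sum_univ_succ, Fin.sum_univ_succ,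
    sum_eq_zero fun i _ => by simp [hookJacobiTrudi]]
  rw [Fin.succAbove_zero, minor0, Fin.succ_zero_eq_one, minor1]
  simp [hookJacobiTrudi, h0, sub_eq_add_neg]

lemma det_hookJacobiTrudi {φ : PowerSeries R} {h : ℕ → R} (h0 : h 0 = 1)
    (hφ : φ * PowerSeries.mk h = 1) (b m : ℕ) :
    (hookJacobiTrudi h b m).det =
      (-1) ^ b * ∑ r ∈ range (b + 1), PowerSeries.coeff r φ * h (m + b - r) := by
  induction b generalizing m with
  | zero =>
    have : PowerSeries.coeff 0 φ = 1 := by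
      simpa [h0] using congrArg (PowerSeries.coeff 0) hφ
    simp [hookJacobiTrudi, this]
  | succ b ih =>
    have antidiag := sum_range_coeff_mul_eq_zero hφ (k := b + 1) (by omega)
    rw [sum_range_succ, Nat.sub_self, h0] at antidiag
    rw [det_hookJacobiTrudi_succ h0, ih, ih, sum_range_succ _ (b + 1),
      show m + (b + 1) - (b + 1) = m by omega]
    simp only [add_comm 1 b, Nat.add_right_comm m 1 b, ← add_assoc]
    linear_combination (-1) ^ b * h m * antidiag

lemma det_eq_det_submatrix_castAdd {n k : ℕ} (A : Matrix (Fin (n + k)) (Fin (n + k)) R)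
    (hlow : ∀ i c : Fin (n + k), n ≤ (i : ℕ) → c < i → A i c = 0)
    (hdiag : ∀ i : Fin (n + k), n ≤ (i : ℕ) → A i i = 1) :
    A.det = (A.submatrix (Fin.castAdd k) (Fin.castAdd k)).det := by
  have hB21 : (A.submatrix finSumFinEquiv finSumFinEquiv).toBlocks₂₁ = 0 := by
    ext i c
    exact hlow _ _ (by simp) (by simp [Fin.lt_def]; omega)
  have hB22 : (A.submatrix finSumFinEquiv finSumFinEquiv).toBlocks₂₂.det = 1 := by
    rw [Matrix.det_of_isUpperTriangular]
    · exact prod_eq_one fun i _ => hdiag _ (by simp)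
    · intro i c hci
      exact hlow _ _ (by simp) (by rw [Fin.lt_def] at hci ⊢; simpa using hci)
  rw [← Matrix.det_submatrix_equiv_self finSumFinEquiv,
    ← Matrix.fromBlocks_toBlocks (A.submatrix finSumFinEquiv finSumFinEquiv), hB21,
    Matrix.det_fromBlocks_zero₂₁, hB22, mul_one]
  rfl

lemma schurAt_hookP_eq_det {N M j : ℕ} (x : Fin N → R) (hj : j < N) :
    schurAt x (hookP M N j) = (hookJacobiTrudi (hfun x) (N - 1 - j) (M - N + 1)).det := by
  obtain ⟨b, rfl⟩ : ∃ b, N = b + 1 + j := ⟨N - 1 - j, by omega⟩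
  rw [schurAt, det_eq_det_submatrix_castAdd (n := b + 1)]
  · rw [show b + 1 + j - 1 - j = b by omega]
    congr 1
    ext r c
    simp only [hookP, hookJacobiTrudi, Matrix.submatrix_apply, Matrix.of_apply, Fin.val_castAdd]
    split_ifs <;> first | rfl | omega | (congr 1; omega)
  · intro i c hi hci
    simp only [hookP, Matrix.of_apply, Fin.lt_def] at hci ⊢
    split_ifs <;> first | rfl | omega
  · intro i hi
    simp only [hookP, Matrix.of_apply]
    split_ifs <;> first | omega | simp [hfun_zero]

lemma schurAt_hookP {N M j : ℕ} (x : Fin N → R) (hj : j < N) (hM : N ≤ M) :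
    schurAt x (hookP M N j) = (-1) ^ (N - 1 - j) * remCoeff (revCharPoly x) (hfun x) N M j := by
  rw [schurAt_hookP_eq_det x hj,
    det_hookJacobiTrudi (hfun_zero x) (revCharPoly_mul_mk_hfun x), remCoeff,
    show N - 1 - j + 1 = N - j by omega]
  congr 1
  refine sum_congr rfl fun r _ => ?_
  rw [coeff_coe, show M - N + 1 + (N - 1 - j) - r = M - j - r by omega]

end HadamardPower

open HadamardPower

theorem hadamardPow_eq_sum_lower_powers_general {F : Type*} [Field F] (N M : ℕ)
    (hMN : N ≤ M) (A : Matrix (Fin N) (Fin N) F) :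
    (Matrix.of fun i k : Fin N => A i k ^ M) =
      ∑ j : Fin N,
        (Matrix.diagonal fun i => (-1 : F) ^ (N - (j : ℕ) - 1) * schurAt (A i) (hookP M N (j : ℕ)))
          * (Matrix.of fun i k : Fin N => A i k ^ (j : ℕ)) := by
  ext i k
  simp only [Matrix.of_apply, Matrix.sum_apply, Matrix.diagonal_mul]
  rw [pow_eq_sum_remCoeff_mul_pow k.pos (natDegree_revCharPoly_le _) (revCharPoly_mul_mk_hfun _)
      (eval_reflect_revCharPoly _ k) (by omega),
    ← Fin.sum_univ_eq_sum_range (fun j => remCoeff (revCharPoly (A i)) (hfun (A i)) N M j * _)]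
  refine sum_congr rfl fun j _ => ?_
  rw [schurAt_hookP _ j.isLt hMN, Nat.sub_right_comm, ← mul_assoc, ← pow_add,
    Even.neg_one_pow ⟨_, rfl⟩, one_mul]

/-- Every Hadamard power `A^{∘M}` with `M ≥ N` is a combination of the Hadamard powers
`A^{∘0}, …, A^{∘(N-1)}` with diagonal-matrix coefficients given by Schur polynomials
of the rows of `A`. -/
theorem hadamardPow_eq_sum_lower_powers {F : Type*} [Field F] (N M : ℕ) (hN : 1 ≤ N)
    (hMN : N ≤ M) (A : Matrix (Fin N) (Fin N) F) :
    (Matrix.of fun i k : Fin N => A i k ^ M) =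
      ∑ j : Fin N,
        (Matrix.diagonal fun i => (-1 : F) ^ (N - (j : ℕ) - 1) * schurAt (A i) (hookP M N (j : ℕ)))
          * (Matrix.of fun i k : Fin N => A i k ^ (j : ℕ)) :=
  hadamardPow_eq_sum_lower_powers_general N M hMN A
end

section
/- Fix ρ > 0, integers M ≥ N ≥ 1, and positive reals c_0,...,c_{N-1}, with C := Σ_{j=0}^{N-1} binom(M,j)^2 binom(M-j-1,N-j-1)^2 ρ^{M-j}/c_j. If c' < -1/C, then there exists a rank-one positive semidefinite N × N matrix A with entries in (0, ρ) such that the matrix obtained by applying f(z) = Σ_{j=0}^{N-1} c_j z^j + c' z^M entrywise to A is not positive semidefinite. -/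
open Matrix BigOperators

/-!
For nodes `u : Fin N → ℝ` and a vector `w`, the quadratic form of `f[u uᵀ]` at `w` is
`∑ j, c j * m_j ^ 2 + c' * m_M ^ 2` with moments `m_k = ∑ i, w i * u i ^ k`. For distinct nodes
the Vandermonde matrix is invertible, so `m_0, …, m_{N-1}` can be prescribed freely, and then
`m_M = ∑ j, λ_j * m_j` where `λ_j` are the coefficients of the interpolant of `t ^ M` at the
nodes. In Newton form the divided differences of `t ^ M` are complete homogeneous symmetric
polynomials of the nodes, so the `λ_j` depend continuously on the nodes even as they coalesce at
`√ρ`, where they become the coefficients `L_j` of the Taylor polynomial of `t ^ M` of degree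
`< N`, with `L_j ^ 2 = C(M,j)² C(M-j-1,N-j-1)² ρ^(M-j)`. Prescribing `m_j = L_j / c j` makes
the form tend to `C + c' * C ^ 2 < 0` as the nodes coalesce.
-/

open Polynomial Filter Topology

section Newton

variable {R S : Type*}

/-- The nodes are listed in reverse order, `[u (k-1), …, u 0]`, so that a Newton step is a cons. -/
def nodeList (u : ℕ → R) : ℕ → List R
  | 0 => []
  | k + 1 => u k :: nodeList u k

@[simp] lemma nodeList_zero (u : ℕ → R) : nodeList u 0 = [] := rfl

@[simp] lemma nodeList_succ (u : ℕ → R) (k : ℕ) : nodeList u (k + 1) = u k :: nodeList u k := rfl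

lemma map_nodeList (f : R → S) (u : ℕ → R) (k : ℕ) :
    (nodeList u k).map f = nodeList (f ∘ u) k := by
  induction k with
  | zero => rfl
  | succ k ih => simp [ih]

lemma nodeList_const (x : R) (k : ℕ) : nodeList (fun _ => x) k = List.replicate k x := by
  induction k with
  | zero => rfl
  | succ k ih => simp [ih, List.replicate_succ]

variable [CommRing R] [CommRing S]

def completeHom : ℕ → List R → R
  | 0, _ => 1
  | _ + 1, [] => 0
  | m + 1, x :: l => completeHom (m + 1) l + x * completeHom m (x :: l)
  termination_by m l => (m, l.length)

@[simp] lemma completeHom_zero (l : List R) : completeHom 0 l = 1 := by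
  cases l <;> simp [completeHom]

@[simp] lemma completeHom_succ_nil (m : ℕ) : completeHom (m + 1) ([] : List R) = 0 := by
  simp [completeHom]

lemma completeHom_succ_cons (m : ℕ) (x : R) (l : List R) :
    completeHom (m + 1) (x :: l) = completeHom (m + 1) l + x * completeHom m (x :: l) := by
  rw [completeHom]

lemma completeHom_succ_cons_sub_cons (m : ℕ) (t a : R) (l : List R) :
    completeHom (m + 1) (t :: l) - completeHom (m + 1) (a :: l) =
      (t - a) * completeHom m (t :: a :: l) := by
  induction m with
  | zero => simp [completeHom_succ_cons]
  | succ m ih =>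
    rw [completeHom_succ_cons, completeHom_succ_cons (m + 1) a,
      completeHom_succ_cons m t (a :: l)]
    linear_combination t * ih

@[simp] lemma completeHom_singleton (m : ℕ) (x : R) : completeHom m [x] = x ^ m := by
  induction m with
  | zero => simp
  | succ m ih => simp [completeHom_succ_cons, ih, pow_succ']

lemma completeHom_replicate (m k : ℕ) (x : R) :
    completeHom m (List.replicate (k + 1) x) = (m + k).choose k * x ^ m := by
  induction m generalizing k with
  | zero => simp
  | succ m ih =>
    induction k with
    | zero => simp
    | succ k ihk =>
      rw [List.replicate_succ, completeHom_succ_cons, ← List.replicate_succ, ihk, ih,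
        show m + 1 + (k + 1) = m + 1 + k + 1 by omega, Nat.choose_succ_succ',
        show m + (k + 1) = m + 1 + k by omega]
      push_cast
      ring

lemma map_completeHom (f : R →+* S) (m : ℕ) (l : List R) :
    f (completeHom m l) = completeHom m (l.map f) := by
  induction m generalizing l with
  | zero => simp
  | succ m ih =>
    induction l with
    | nil => simp
    | cons x l ihl => simp [completeHom_succ_cons, ihl, ih]

/-- Newton form of the interpolant of `X ^ M` at the nodes `u 0, …, u (N-1)`: the divided
difference of `t ^ M` at `u 0, …, u k` is `completeHom (M - k)` of these nodes. -/
noncomputable def newtonInterp (M N : ℕ) (u : ℕ → R) : R[X] :=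
  ∑ k ∈ Finset.range N,
    C (completeHom (M - k) (nodeList u (k + 1))) * ∏ i ∈ Finset.range k, (X - C (u i))

lemma pow_eq_newton_add_remainder (M : ℕ) (u : ℕ → R) (t : R) {k : ℕ} (hk : k ≤ M) :
    t ^ M = ∑ j ∈ Finset.range k,
        completeHom (M - j) (nodeList u (j + 1)) * ∏ i ∈ Finset.range j, (t - u i)
      + completeHom (M - k) (t :: nodeList u k) * ∏ i ∈ Finset.range k, (t - u i) := by
  induction k with
  | zero => simp
  | succ k ih =>
    have hdiff := completeHom_succ_cons_sub_cons (M - (k + 1)) t (u k) (nodeList u k)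
    rw [show M - (k + 1) + 1 = M - k by omega] at hdiff
    rw [ih (by omega), Finset.sum_range_succ, Finset.prod_range_succ]
    simp only [nodeList_succ]
    linear_combination (∏ i ∈ Finset.range k, (t - u i)) * hdiff

lemma eval_newtonInterp {M N : ℕ} (hNM : N ≤ M) (u : ℕ → R) {i : ℕ} (hi : i < N) :
    (newtonInterp M N u).eval (u i) = u i ^ M := by
  have hvanish : ∏ j ∈ Finset.range N, (u i - u j) = 0 :=
    Finset.prod_eq_zero (Finset.mem_range.2 hi) (sub_self _)
  simp [newtonInterp, eval_finsetSum, eval_prod, pow_eq_newton_add_remainder M u (u i) hNM,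
    hvanish]

lemma natDegree_newtonInterp_le (M N : ℕ) (u : ℕ → R) :
    (newtonInterp M N u).natDegree ≤ N - 1 := by
  refine natDegree_sum_le_of_forall_le _ _ fun k hk => (natDegree_C_mul_le _ _).trans ?_
  refine (natDegree_prod_le _ _).trans
    ((Finset.sum_le_sum fun i _ => natDegree_X_sub_C_le (u i)).trans ?_)
  simp only [Finset.sum_const, Finset.card_range, smul_eq_mul, mul_one]
  have := Finset.mem_range.1 hk
  omega

lemma map_newtonInterp (f : R →+* S) (M N : ℕ) (u : ℕ → R) :
    (newtonInterp M N u).map f = newtonInterp M N (f ∘ u) := by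
  simp only [newtonInterp, Polynomial.map_sum, Polynomial.map_mul, map_C, Polynomial.map_prod,
    Polynomial.map_sub, map_X, map_completeHom f, map_nodeList]
  rfl

lemma continuous_coeff_newtonInterp [TopologicalSpace R] [IsTopologicalRing R] (M N j : ℕ) :
    Continuous fun u : ℕ → R => (newtonInterp M N u).coeff j := by
  have hpoly : ∀ u : ℕ → R, (newtonInterp M N u).coeff j =
      MvPolynomial.eval u ((newtonInterp M N MvPolynomial.X).coeff j) := by
    intro u
    rw [← coeff_map, map_newtonInterp]
    congr
    ext i
    simp
  simpa only [hpoly] using MvPolynomial.continuous_eval _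

end Newton

lemma Int.sum_range_neg_one_pow_mul_choose_mul_choose {M N j : ℕ} (hj : j < N) (hNM : N ≤ M) :
    ∑ k ∈ Finset.range N, (-1 : ℤ) ^ (k - j) * M.choose k * k.choose j =
      (-1) ^ (N - j - 1) * M.choose j * (M - j - 1).choose (N - j - 1) := by
  obtain ⟨n, rfl⟩ : ∃ n, N = j + (n + 1) := ⟨N - j - 1, by omega⟩
  obtain ⟨m, rfl⟩ : ∃ m, M = j + (m + 1) := ⟨M - j - 1, by omega⟩
  have hshift : ∀ r ∈ Finset.range (n + 1), (-1 : ℤ) ^ (j + r - j) * (j + (m + 1)).choose (j + r)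
      * (j + r).choose j = (j + (m + 1)).choose j * ((-1) ^ r * (m + 1).choose r) := by
    intro r hr
    have hrm : r ≤ m := by simp at hr; omega
    have := Nat.choose_mul (n := j + (m + 1)) (k := j + r) (s := j) (by omega)
    rw [show j + (m + 1) - j = m + 1 by omega, show j + r - j = r by omega] at this
    rw [show j + r - j = r by omega, mul_assoc, ← Nat.cast_mul, this]
    push_cast
    ring
  rw [Finset.sum_range_add, Finset.sum_congr rfl hshift, ← Finset.mul_sum,
    Int.alternating_sum_range_choose_eq_choose, Finset.sum_eq_zero fun k hk => by
      rw [Nat.choose_eq_zero_of_lt (Finset.mem_range.1 hk)]; simp]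
  simp only [show j + (n + 1) - j - 1 = n by omega, show j + (m + 1) - j - 1 = m by omega]
  ring

lemma coeff_newtonInterp_const {R : Type*} [CommRing R] {M N j : ℕ} (hNM : N ≤ M) (hj : j < N)
    (x : R) :
    (newtonInterp M N fun _ => x).coeff j =
      (-1) ^ (N - j - 1) * M.choose j * (M - j - 1).choose (N - j - 1) * x ^ (M - j) := by
  have hterm : ∀ k ∈ Finset.range N,
      completeHom (M - k) (List.replicate (k + 1) x) * ((X - C x) ^ k).coeff j =
        (((-1 : ℤ) ^ (k - j) * M.choose k * k.choose j : ℤ) : R) * x ^ (M - j) := by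
    intro k hk
    have hkM : k ≤ M := by simp at hk; omega
    rw [completeHom_replicate, Nat.sub_add_cancel hkM, sub_eq_add_neg, ← C_neg,
      coeff_X_add_C_pow]
    rcases lt_or_ge k j with hkj | hjk
    · simp [Nat.choose_eq_zero_of_lt hkj]
    · rw [neg_pow, show M - j = (M - k) + (k - j) by omega, pow_add]
      push_cast
      ring
  simp only [newtonInterp, finsetSum_coeff, coeff_C_mul, Finset.prod_const, Finset.card_range,
    nodeList_const]
  rw [Finset.sum_congr rfl hterm, ← Finset.sum_mul, ← Int.cast_sum,
    Int.sum_range_neg_one_pow_mul_choose_mul_choose hj hNM]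
  push_cast
  ring

lemma sq_coeff_newtonInterp_sqrt {M N j : ℕ} (hNM : N ≤ M) (hj : j < N) {ρ : ℝ} (hρ : 0 ≤ ρ) :
    (newtonInterp M N fun _ => √ρ).coeff j ^ 2 =
      (M.choose j : ℝ) ^ 2 * ((M - j - 1).choose (N - j - 1) : ℝ) ^ 2 * ρ ^ (M - j) := by
  rw [coeff_newtonInterp_const hNM hj, mul_pow, mul_pow, mul_pow, pow_right_comm (-1 : ℝ),
    neg_one_sq, one_pow, one_mul, pow_right_comm √ρ, Real.sq_sqrt hρ]

section Moments

variable {n R : Type*} [Fintype n] [CommRing R]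

lemma dotProduct_mulVec_pow_mul (v w : n → R) (m : ℕ) :
    w ⬝ᵥ (of fun i k => (v i * v k) ^ m) *ᵥ w = (w ⬝ᵥ fun i => v i ^ m) ^ 2 := by
  simp only [dotProduct, mulVec, of_apply, mul_pow, sq, Finset.sum_mul, Finset.mul_sum]
  exact Finset.sum_congr rfl fun i _ => Finset.sum_congr rfl fun k _ => by ring

lemma dotProduct_mulVec_entrywise_poly {ι : Type*} [Fintype ι] (c : ι → R) (e : ι → ℕ)
    (c' : R) (M : ℕ) (v w : n → R) :
    w ⬝ᵥ (of fun i k => (∑ j, c j * (v i * v k) ^ e j) + c' * (v i * v k) ^ M) *ᵥ w =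
      ∑ j, c j * (w ⬝ᵥ fun i => v i ^ e j) ^ 2 + c' * (w ⬝ᵥ fun i => v i ^ M) ^ 2 := by
  have hsplit : (of fun i k => (∑ j, c j * (v i * v k) ^ e j) + c' * (v i * v k) ^ M) =
      ∑ j, c j • (of fun i k => (v i * v k) ^ e j) + c' • of fun i k => (v i * v k) ^ M := by
    ext i k
    simp [Matrix.sum_apply]
  simp only [hsplit, add_mulVec, sum_mulVec, smul_mulVec, dotProduct_add, dotProduct_sum,
    dotProduct_smul, dotProduct_mulVec_pow_mul, smul_eq_mul]

lemma dotProduct_eval_eq_sum_coeff {N : ℕ} {p : R[X]} (hp : p.natDegree < N) {v w : n → R}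
    {a : Fin N → R} (hw : ∀ j : Fin N, (w ⬝ᵥ fun i => v i ^ (j : ℕ)) = a j) :
    (w ⬝ᵥ fun i => p.eval (v i)) = ∑ j : Fin N, p.coeff j * a j := by
  calc (w ⬝ᵥ fun i => p.eval (v i))
      = ∑ j ∈ Finset.range N, p.coeff j * (w ⬝ᵥ fun i => v i ^ j) := by
        simp only [dotProduct, eval_eq_sum_range' hp, Finset.mul_sum]
        rw [Finset.sum_comm]
        exact Finset.sum_congr rfl fun j _ => Finset.sum_congr rfl fun i _ => by ring
    _ = ∑ j : Fin N, p.coeff j * a j := by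
        rw [← Fin.sum_univ_eq_sum_range (fun j => p.coeff j * (w ⬝ᵥ fun i => v i ^ j))]
        simp only [hw]

end Moments

lemma exists_dotProduct_pow_eq {K : Type*} [Field K] {N : ℕ} {v : Fin N → K}
    (hv : Function.Injective v) (a : Fin N → K) :
    ∃ w : Fin N → K, ∀ j : Fin N, (w ⬝ᵥ fun i => v i ^ (j : ℕ)) = a j := by
  have hdet : IsUnit (vandermonde v).det := (det_vandermonde_ne_zero_iff.2 hv).isUnit
  refine ⟨a ᵥ* (vandermonde v)⁻¹, fun j => ?_⟩
  have h := vecMul_vecMul a (vandermonde v)⁻¹ (vandermonde v)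
  rw [nonsing_inv_mul _ hdet, vecMul_one] at h
  exact congrFun h j

lemma exists_dotProduct_pow_eq_sum_coeff_newtonInterp {K : Type*} [Field K] {M N : ℕ}
    (hN : 0 < N) (hNM : N ≤ M) {u : ℕ → K} (hu : Function.Injective fun i : Fin N => u i)
    (a : Fin N → K) :
    ∃ w : Fin N → K, (∀ j : Fin N, (w ⬝ᵥ fun i => u i ^ (j : ℕ)) = a j) ∧
      (w ⬝ᵥ fun i => u i ^ M) = ∑ j : Fin N, (newtonInterp M N u).coeff j * a j := by
  obtain ⟨w, hw⟩ := exists_dotProduct_pow_eq hu a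
  refine ⟨w, hw, ?_⟩
  calc (w ⬝ᵥ fun i => u i ^ M) = w ⬝ᵥ fun i => (newtonInterp M N u).eval (u i) :=
        congrArg _ (funext fun i => (eval_newtonInterp hNM u i.2).symm)
    _ = _ := dotProduct_eval_eq_sum_coeff ((natDegree_newtonInterp_le M N u).trans_lt
        (by omega)) hw

lemma exists_mem_Ioo_neg_of_continuousAt {Φ : ℝ → ℝ} (hΦ : ContinuousAt Φ 0) (h0 : Φ 0 < 0)
    {δ : ℝ} (hδ : 0 < δ) : ∃ ε ∈ Set.Ioo 0 δ, Φ ε < 0 := by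
  have hIoo : ∀ᶠ ε in 𝓝[>] 0, ε ∈ Set.Ioo 0 δ := Ioo_mem_nhdsGT hδ
  exact (hIoo.and ((hΦ.eventually_lt continuousAt_const h0).filter_mono nhdsWithin_le_nhds)).exists

lemma sub_mul_succ_mem_Ioo {s ε : ℝ} {N i : ℕ} (hε : 0 < ε) (hεN : ε * N < s) (hi : i < N) :
    s - ε * (i + 1) ∈ Set.Ioo 0 s := by
  have hiN : (i : ℝ) + 1 ≤ N := by exact_mod_cast hi
  constructor <;> nlinarith

lemma sum_choose_sq_mul_pow_div_pos {ρ : ℝ} (hρ : 0 < ρ) {N M : ℕ} (hN : 1 ≤ N) (hMN : N ≤ M)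
    {c : Fin N → ℝ} (hc : ∀ j, 0 < c j) :
    0 < ∑ j : Fin N, (M.choose j : ℝ) ^ 2 * ((M - j - 1).choose (N - j - 1) : ℝ) ^ 2
      * ρ ^ (M - j) / c j := by
  refine Finset.sum_pos (fun j _ => ?_) ⟨⟨0, hN⟩, Finset.mem_univ _⟩
  have := Nat.choose_pos (show (j : ℕ) ≤ M by omega)
  have := Nat.choose_pos (show N - j - 1 ≤ M - j - 1 by omega)
  have := hc j
  positivity

/-- Sharpness: if `c' < -1/C(c; z^M; N, ρ)`, then the polynomial
`f(z) = Σ_{j<N} c_j z^j + c' z^M` applied entrywise fails to preserve positive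
semidefiniteness on some rank-one psd matrix `u uᵀ` with entries in `(0, ρ)`. -/
theorem exists_rank_one_not_posSemidef (ρ : ℝ) (hρ : 0 < ρ) (N M : ℕ) (hN : 1 ≤ N)
    (hMN : N ≤ M) (c : Fin N → ℝ) (hc : ∀ j, 0 < c j) (c' : ℝ)
    (hc' : c' < -(∑ j : Fin N, ((M.choose (j : ℕ) : ℝ) ^ 2
        * ((M - (j : ℕ) - 1).choose (N - (j : ℕ) - 1) : ℝ) ^ 2
        * ρ ^ (M - (j : ℕ)) / c j))⁻¹) :
    ∃ u : Fin N → ℝ, (∀ i, u i ∈ Set.Ioo 0 (Real.sqrt ρ)) ∧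
      ¬ (Matrix.of fun i k : Fin N =>
          (∑ j : Fin N, c j * (u i * u k) ^ (j : ℕ)) + c' * (u i * u k) ^ M).PosSemidef := by
  set s := √ρ
  set C := ∑ j : Fin N, (M.choose j : ℝ) ^ 2 * ((M - j - 1).choose (N - j - 1) : ℝ) ^ 2
    * ρ ^ (M - j) / c j
  have hCpos : 0 < C := sum_choose_sq_mul_pow_div_pos hρ hN hMN hc
  have hcC : c' * C < -1 := by simpa [hCpos.ne'] using mul_lt_mul_of_pos_right hc' hCpos
  set a : Fin N → ℝ := fun j => (newtonInterp M N fun _ => s).coeff j / c j with ha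
  have hca : ∑ j, c j * a j ^ 2 = C := Finset.sum_congr rfl fun j _ => by
    rw [ha, div_pow, sq_coeff_newtonInterp_sqrt hMN j.2 hρ.le]
    field_simp [(hc j).ne']
  set G : ℝ → ℝ := fun ε => ∑ j : Fin N, (newtonInterp M N fun i => s - ε * (i + 1)).coeff j * a j
  have hG : Continuous G := continuous_finsetSum _ fun j _ =>
    ((continuous_coeff_newtonInterp M N j).comp (continuous_pi fun i => by fun_prop)).mul
      continuous_const
  have hG0 : G 0 = C := by
    simp only [G, zero_mul, sub_zero, ← hca]
    exact Finset.sum_congr rfl fun j _ => by rw [ha]; field_simp [(hc j).ne']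
  have hs : 0 < s := Real.sqrt_pos.2 hρ
  obtain ⟨ε, ⟨hε0, hεs⟩, hεneg⟩ := exists_mem_Ioo_neg_of_continuousAt
    (Φ := fun ε => C + c' * G ε ^ 2)
    (continuous_const.add (continuous_const.mul (hG.pow 2))).continuousAt
    (show C + c' * G 0 ^ 2 < 0 by rw [hG0]; nlinarith) (show 0 < s / N by positivity)
  have hεN : ε * N < s := (lt_div_iff₀ (by positivity)).1 hεs
  refine ⟨fun i => s - ε * ((i : ℕ) + 1), fun i => sub_mul_succ_mem_Ioo hε0 hεN i.2, ?_⟩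
  obtain ⟨w, hw, hwM⟩ := exists_dotProduct_pow_eq_sum_coeff_newtonInterp (by omega) hMN
    (u := fun i : ℕ => s - ε * (i + 1)) (fun i k h => Fin.ext (by simpa [hε0.ne'] using h)) a
  refine fun hpsd => (hpsd.dotProduct_mulVec_nonneg w).not_gt ?_
  rw [star_trivial, dotProduct_mulVec_entrywise_poly, hwM]
  simpa only [hw, hca] using hεneg
end

section
/- Let 0 < ρ ≤ ∞ and let f(z) = Σ_{k≥0} c_k z^k be a real-analytic function on (−ρ, ρ) with real coefficients. If applying f entrywise maps every positive semidefinite rank-one N × N matrix with entries in (0, ρ) to a positive semidefinite matrix, then the first N nonzero Taylor coefficients of f are strictly positive. -/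
open Matrix BigOperators

/-! Fix a vector `v` and a positive vector `w`. For `u = √δ • w` the quadratic form
`vᵀ f[u uᵀ] v` expands as `∑ⱼ cⱼ (∑ᵢ vᵢ wᵢ ^ j) ^ 2 δ ^ j`, which is nonnegative for small `δ > 0`;
hence its first nonzero coefficient is nonnegative. With `wᵢ = 2 ^ i` we have
`∑ᵢ vᵢ wᵢ ^ j = Q (2 ^ j)` for the polynomial `Q = ∑ᵢ vᵢ Xⁱ`. Taking for `Q` the polynomial of
degree `< N` vanishing at `2 ^ j` for the fewer than `N` indices `j < k` with `cⱼ ≠ 0`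
kills every term below `k`, and leaves `c_k Q (2 ^ k) ^ 2 ≥ 0` with `Q (2 ^ k) ≠ 0`. -/

open Polynomial Filter Topology

theorem nonneg_of_eventually_tsum_mul_pow_nonneg {a : ℕ → ℝ} {k : ℕ} {t₀ M : ℝ} (ht₀ : 0 < t₀)
    (hM : ∀ j, |a j| * t₀ ^ j ≤ M) (hlow : ∀ j < k, a j = 0)
    (hnonneg : ∀ᶠ t in 𝓝[>] 0, 0 ≤ ∑' j, a j * t ^ j) : 0 ≤ a k := by
  set g : ℝ → ℝ := fun t => ∑' j, a (j + k) * t ^ j with hg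
  set B := Metric.closedBall (0 : ℝ) (t₀ / 2)
  have hB : B ∈ 𝓝 (0 : ℝ) := Metric.closedBall_mem_nhds 0 (by positivity)
  have hbound : ∀ j, ∀ t ∈ B, ‖a (j + k) * t ^ j‖ ≤ M / t₀ ^ k * (1 / 2) ^ j := by
    intro j t ht
    have ht' : |t| ≤ t₀ / 2 := by simpa [B] using ht
    calc ‖a (j + k) * t ^ j‖ = |a (j + k)| * |t| ^ j := by rw [Real.norm_eq_abs, abs_mul, abs_pow]
      _ ≤ |a (j + k)| * (t₀ / 2) ^ j := by gcongr
      _ = |a (j + k)| * t₀ ^ (j + k) / t₀ ^ k * (1 / 2) ^ j := by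
        field_simp; ring
      _ ≤ M / t₀ ^ k * (1 / 2) ^ j := by gcongr; exact hM _
  have hu : Summable fun j : ℕ => M / t₀ ^ k * (1 / 2 : ℝ) ^ j :=
    summable_geometric_two.mul_left _
  have hg_cont : ContinuousAt g 0 :=
    (continuousOn_tsum (fun j => by fun_prop) hu hbound).continuousAt hB
  have hg0 : g 0 = a k := by
    simp only [hg]
    rw [tsum_eq_single 0 (fun j hj => by simp [hj])]
    simp
  -- `t ^ k * g t` is the whole series, since its first `k` terms vanish.
  have hg_nonneg : ∀ᶠ t in 𝓝[>] 0, 0 ≤ g t := by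
    filter_upwards [hnonneg, nhdsWithin_le_nhds hB, self_mem_nhdsWithin] with t ht htB htpos
    have hshift : HasSum (fun j => a (j + k) * t ^ (j + k)) (t ^ k * g t) :=
      (((hu.of_norm_bounded (fun j => hbound j t htB)).hasSum).mul_left (t ^ k)).congr_fun
        fun j => by rw [pow_add]; ring
    have hhead : ∑ j ∈ Finset.range k, a j * t ^ j = 0 :=
      Finset.sum_eq_zero fun j hj => by rw [hlow j (Finset.mem_range.1 hj), zero_mul]
    have hsum : HasSum (fun j => a j * t ^ j) (t ^ k * g t) := by
      simpa [hhead] using (hasSum_nat_add_iff' k).1 (by simpa [hhead] using hshift)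
    rw [hsum.tsum_eq] at ht
    exact nonneg_of_mul_nonneg_right ht (pow_pos htpos k)
  exact hg0 ▸ ge_of_tendsto (hg_cont.tendsto.mono_left nhdsWithin_le_nhds) hg_nonneg

theorem exists_sum_mul_pow_eq_zero_ne_zero {R : Type*} [CommRing R] [IsDomain R] {N : ℕ}
    {S : Finset R} (hS : S.card < N) {z : R} (hz : z ∉ S) :
    ∃ v : Fin N → R, (∀ y ∈ S, ∑ i, v i * y ^ (i : ℕ) = 0) ∧ ∑ i, v i * z ^ (i : ℕ) ≠ 0 := by
  set Q := Lagrange.nodal S (id : R → R)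
  have hQ : Q.natDegree < N := by rwa [Lagrange.natDegree_nodal]
  have heval : ∀ y : R, ∑ i : Fin N, Q.coeff i * y ^ (i : ℕ) = Q.eval y := fun y => by
    rw [eval_eq_sum_range' hQ, ← Fin.sum_univ_eq_sum_range (fun i : ℕ => Q.coeff i * y ^ i)]
  refine ⟨fun i => Q.coeff i, fun y hy => ?_, ?_⟩
  · rw [heval]; exact Lagrange.eval_nodal_at_node (v := (id : R → R)) hy
  · rw [heval]; exact Lagrange.eval_nodal_not_at_node fun y hy h => hz (h ▸ hy)

theorem hasSum_dotProduct_mulVec_of_hasSum {ι R : Type*} [Fintype ι] [CommRing R]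
    [TopologicalSpace R] [IsTopologicalRing R] {c : ℕ → R} {f : R → R} (x v : ι → R)
    (hf : ∀ i l, HasSum (fun j => c j * (x i * x l) ^ j) (f (x i * x l))) :
    HasSum (fun j => c j * (∑ i, v i * x i ^ j) ^ 2)
      (v ⬝ᵥ (of fun i l => f (x i * x l)) *ᵥ v) := by
  have hval : v ⬝ᵥ (of fun i l => f (x i * x l)) *ᵥ v
      = ∑ i, ∑ l, v i * v l * f (x i * x l) := by
    simp only [dotProduct, mulVec, of_apply, Finset.mul_sum]
    refine Finset.sum_congr rfl fun i _ => Finset.sum_congr rfl fun l _ => ?_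
    ring
  rw [hval]
  refine (hasSum_sum fun i _ => hasSum_sum fun l _ => (hf i l).mul_left (v i * v l)).congr_fun
    fun j => ?_
  rw [sq, Finset.sum_mul_sum, Finset.mul_sum]
  refine Finset.sum_congr rfl fun i _ => ?_
  rw [Finset.mul_sum]
  refine Finset.sum_congr rfl fun l _ => ?_
  ring

theorem sq_sum_mul_pow_le {ι : Type*} [Fintype ι] (v w : ι → ℝ) {B : ℝ} (hw : ∀ i, |w i| ≤ B)
    (j : ℕ) : (∑ i, v i * w i ^ j) ^ 2 ≤ (∑ i, |v i|) ^ 2 * (B ^ 2) ^ j := by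
  have h : |∑ i, v i * w i ^ j| ≤ (∑ i, |v i|) * B ^ j := by
    calc |∑ i, v i * w i ^ j| ≤ ∑ i, |v i| * |w i| ^ j := by
          simpa only [abs_mul, abs_pow] using
            Finset.abs_sum_le_sum_abs (fun i => v i * w i ^ j) Finset.univ
      _ ≤ ∑ i, |v i| * B ^ j := by gcongr with i; exact hw i
      _ = (∑ i, |v i|) * B ^ j := by rw [Finset.sum_mul]
  calc (∑ i, v i * w i ^ j) ^ 2 = |∑ i, v i * w i ^ j| ^ 2 := (sq_abs _).symm
    _ ≤ ((∑ i, |v i|) * B ^ j) ^ 2 := by gcongr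
    _ = (∑ i, |v i|) ^ 2 * (B ^ 2) ^ j := by ring

theorem abs_mul_sq_sum_mul_pow_mul_le {ι : Type*} [Fintype ι] {c : ℕ → ℝ} {x₀ M B : ℝ}
    (hB : 0 < B) (hcM : ∀ j, |c j| * x₀ ^ j ≤ M) (v w : ι → ℝ) (hw : ∀ i, |w i| ≤ B) (j : ℕ) :
    |c j * (∑ i, v i * w i ^ j) ^ 2| * (x₀ / B ^ 2) ^ j ≤ M * (∑ i, |v i|) ^ 2 := by
  have hM : 0 ≤ M := (by positivity : 0 ≤ |c 0| * x₀ ^ 0).trans (hcM 0)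
  calc |c j * (∑ i, v i * w i ^ j) ^ 2| * (x₀ / B ^ 2) ^ j
      = (|c j| * x₀ ^ j) * ((∑ i, v i * w i ^ j) ^ 2 / (B ^ 2) ^ j) := by
        rw [abs_mul, abs_of_nonneg (sq_nonneg (∑ i, v i * w i ^ j)), div_pow]; ring
    _ ≤ M * (∑ i, |v i|) ^ 2 :=
        mul_le_mul (hcM j) ((div_le_iff₀ (by positivity)).2 (sq_sum_mul_pow_le v w hw j))
          (by positivity) hM

theorem tsum_mul_sq_sum_mul_pow_mul_pow_nonneg {ι : Type*} [Fintype ι] {c : ℕ → ℝ}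
    {f : ℝ → ℝ} {δ : ℝ} (hδ : 0 ≤ δ) (w v : ι → ℝ)
    (hf : ∀ i l, HasSum (fun j => c j * (√δ * w i * (√δ * w l)) ^ j) (f (√δ * w i * (√δ * w l))))
    (hpsd : (of fun i l => f (√δ * w i * (√δ * w l))).PosSemidef) :
    0 ≤ ∑' j, c j * (∑ i, v i * w i ^ j) ^ 2 * δ ^ j := by
  have hterm : ∀ j, c j * (∑ i, v i * w i ^ j) ^ 2 * δ ^ j
      = c j * (∑ i, v i * (√δ * w i) ^ j) ^ 2 := fun j => by
    have hsum : ∑ i, v i * (√δ * w i) ^ j = √δ ^ j * ∑ i, v i * w i ^ j := by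
      rw [Finset.mul_sum]; exact Finset.sum_congr rfl fun i _ => by ring
    rw [hsum, mul_pow, ← pow_mul, mul_comm j, pow_mul, Real.sq_sqrt hδ]; ring
  rw [((hasSum_dotProduct_mulVec_of_hasSum _ v hf).congr_fun hterm).tsum_eq]
  simpa using hpsd.dotProduct_mulVec_nonneg v

theorem coeff_mul_sq_sum_mul_pow_nonneg_of_posSemidef {ι : Type*} [Fintype ι] {c : ℕ → ℝ}
    {f : ℝ → ℝ} {x₀ : ℝ} (hx₀ : 0 < x₀)
    (hf : ∀ x, 0 < x → x ≤ x₀ → HasSum (fun j => c j * x ^ j) (f x))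
    (hpsd : ∀ u : ι → ℝ, (∀ i, 0 < u i ∧ u i ^ 2 < x₀) →
      (of fun i l => f (u i * u l)).PosSemidef)
    (w v : ι → ℝ) (hw : ∀ i, 0 < w i) {k : ℕ}
    (hlow : ∀ j < k, c j * (∑ i, v i * w i ^ j) ^ 2 = 0) :
    0 ≤ c k * (∑ i, v i * w i ^ k) ^ 2 := by
  set B := 1 + ∑ i, w i
  have hwB : ∀ i, w i ≤ B := fun i =>
    (Finset.single_le_sum (fun i _ => (hw i).le) (Finset.mem_univ i)).trans
      (le_add_of_nonneg_left zero_le_one)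
  have hB : 0 < B := add_pos_of_pos_of_nonneg one_pos (Finset.sum_nonneg fun i _ => (hw i).le)
  have hcM : ∀ j, |c j| * x₀ ^ j ≤ ∑' j, |c j| * x₀ ^ j := fun j => by
    simpa [abs_mul, abs_of_pos hx₀] using
      (hf x₀ hx₀ le_rfl).summable.abs.le_tsum j fun _ _ => abs_nonneg _
  have ht₀ : 0 < x₀ / B ^ 2 := by positivity
  refine nonneg_of_eventually_tsum_mul_pow_nonneg ht₀
    (abs_mul_sq_sum_mul_pow_mul_le hB hcM v w fun i => (abs_of_pos (hw i)).trans_le (hwB i))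
    hlow ?_
  filter_upwards [Ioo_mem_nhdsGT ht₀] with δ ⟨hδ, hδB⟩
  have hx : ∀ i l, 0 < √δ * w i * (√δ * w l) ∧ √δ * w i * (√δ * w l) < x₀ := fun i l => by
    have hww : w i * w l ≤ B ^ 2 := by
      rw [sq]; exact mul_le_mul (hwB i) (hwB l) (hw l).le hB.le
    rw [show √δ * w i * (√δ * w l) = (√δ * √δ) * (w i * w l) by ring, Real.mul_self_sqrt hδ.le]
    refine ⟨mul_pos hδ (mul_pos (hw i) (hw l)), ?_⟩
    calc δ * (w i * w l) ≤ δ * B ^ 2 := by gcongr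
      _ < x₀ := (lt_div_iff₀ (by positivity)).1 hδB
  exact tsum_mul_sq_sum_mul_pow_mul_pow_nonneg hδ.le w v
    (fun i l => hf _ (hx i l).1 (hx i l).2.le)
    (hpsd _ fun i => ⟨mul_pos (Real.sqrt_pos.2 hδ) (hw i), by simpa [sq] using (hx i i).2⟩)

open ENNReal in
theorem first_N_nonzero_coeffs_pos_general (ρ : ℝ≥0∞) (hρ : 0 < ρ) (N : ℕ)
    (c : ℕ → ℝ) (f : ℝ → ℝ)
    (hf : ∀ x : ℝ, ENNReal.ofReal |x| < ρ → HasSum (fun k => c k * x ^ k) (f x))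
    (hpres : ∀ u : Fin N → ℝ, (∀ i, 0 < u i ∧ ENNReal.ofReal (u i ^ 2) < ρ) →
      (Matrix.of fun i k : Fin N => f (u i * u k)).PosSemidef) :
    ∀ k : ℕ, c k ≠ 0 → ((Finset.range k).filter fun j => c j ≠ 0).card < N → 0 < c k := by
  intro k hck hcard
  obtain ⟨x₀, -, hx₀, hx₀ρ⟩ := ENNReal.lt_iff_exists_real_btwn.1 hρ
  have hlt : ∀ x ≤ x₀, ENNReal.ofReal x < ρ := fun x hx =>
    (ENNReal.ofReal_le_ofReal hx).trans_lt hx₀ρ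
  have hpow_inj : Function.Injective fun j : ℕ => (2 : ℝ) ^ j :=
    pow_right_injective₀ two_pos (by norm_num)
  obtain ⟨v, hv_zero, hv_ne⟩ := exists_sum_mul_pow_eq_zero_ne_zero
    (S := ((Finset.range k).filter fun j => c j ≠ 0).image fun j => (2 : ℝ) ^ j)
    (Finset.card_image_le.trans_lt hcard) (z := 2 ^ k) (by simp [hpow_inj.eq_iff])
  set w : Fin N → ℝ := fun i => 2 ^ (i : ℕ)
  have hs : ∀ j, ∑ i, v i * w i ^ j = ∑ i, v i * (2 ^ j) ^ (i : ℕ) := fun j => by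
    simp only [w, pow_right_comm (2 : ℝ)]
  have hlow : ∀ j < k, c j * (∑ i, v i * w i ^ j) ^ 2 = 0 := fun j hj => by
    by_cases hcj : c j = 0
    · rw [hcj, zero_mul]
    · rw [hs, hv_zero _ (Finset.mem_image_of_mem _ (by simp [hj, hcj])), sq, mul_zero, mul_zero]
  have hk := coeff_mul_sq_sum_mul_pow_nonneg_of_posSemidef (ENNReal.ofReal_pos.1 hx₀)
    (fun x hx hxx => hf x (by rw [abs_of_pos hx]; exact hlt x hxx))
    (fun u hu => hpres u fun i => ⟨(hu i).1, hlt _ (hu i).2.le⟩) w v (fun i => by positivity)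
    hlow
  have hsk : ∑ i, v i * w i ^ k ≠ 0 := by rwa [hs]
  exact lt_of_le_of_ne (nonneg_of_mul_nonneg_left hk (by positivity)) hck.symm

open ENNReal in
/-- Horn-type lemma for analytic functions: if `f(x) = Σ_k c_k x^k` on `(-ρ, ρ)` maps
every rank-one psd matrix with entries in `(0, ρ)` entrywise into the psd cone
(`N × N` matrices), then the first `N` nonzero Taylor coefficients of `f` are positive. -/
theorem first_N_nonzero_coeffs_pos (ρ : ℝ≥0∞) (hρ : 0 < ρ) (N : ℕ) (hN : 1 ≤ N)
    (c : ℕ → ℝ) (f : ℝ → ℝ)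
    (hf : ∀ x : ℝ, ENNReal.ofReal |x| < ρ → HasSum (fun k => c k * x ^ k) (f x))
    (hpres : ∀ u : Fin N → ℝ, (∀ i, 0 < u i ∧ ENNReal.ofReal (u i ^ 2) < ρ) →
      (Matrix.of fun i k : Fin N => f (u i * u k)).PosSemidef) :
    ∀ k : ℕ, c k ≠ 0 → ((Finset.range k).filter fun j => c j ≠ 0).card < N → 0 < c k :=
  first_N_nonzero_coeffs_pos_general ρ hρ N c f hf hpres
end

section
/- Fix positive reals c_0,...,c_{N-1} and define h_c(z) = Σ_{j=0}^{N-1} c_j z^j. For every N × N complex positive semidefinite matrix A, the kernel of h_c[A] (entrywise application) equals the intersection over all n ≥ 0 of the kernels of the Hadamard powers A^{∘n}. -/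
open Matrix BigOperators

/-!
Every Hadamard power `A^{∘n}` is positive semidefinite by the Schur product theorem, so
`h_c[A] = ∑ c_j A^{∘j}` with `c_j > 0` kills `v` iff each `A^{∘j}`, `j < N`, does (look at
`v* h_c[A] v`). Row `i` of `A^{∘n} v = 0` reads `∑_k a_k^n v_k = 0` with `a_k = A i k`; modulo
`∏_k (X - a_k)`, a polynomial of degree `N`, `X^n` is a polynomial of degree `< N` taking the same
values at the `a_k`, so the cases `n < N` imply all others.
-/

open Polynomial

theorem Polynomial.eval_modByMonic_eq_of_isRoot {R : Type*} [CommRing R] (p : R[X]) {q : R[X]}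
    {x : R} (hx : q.IsRoot x) : (p %ₘ q).eval x = p.eval x := by
  conv_rhs => rw [← modByMonic_add_div p q]
  simp [hx.eq_zero]

theorem Finset.sum_pow_mul_eq_zero_of_forall_lt_card {R ι : Type*} [CommRing R]
    [Nontrivial R] [Fintype ι] (a v : ι → R)
    (h : ∀ j < Fintype.card ι, ∑ k, a k ^ j * v k = 0) (n : ℕ) :
    ∑ k, a k ^ n * v k = 0 := by
  rcases isEmpty_or_nonempty ι with _ | _
  · simp
  set q : R[X] := ∏ k, (X - C (a k))
  have hq : q.Monic := monic_prod_of_monic _ _ fun k _ => monic_X_sub_C (a k)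
  have hq_natDegree : q.natDegree = Fintype.card ι := by
    simp [q, natDegree_prod_of_monic _ _ fun k _ => monic_X_sub_C (a k)]
  have hroot (k : ι) : q.IsRoot (a k) := by
    simpa [q, IsRoot, eval_prod] using
      Finset.prod_eq_zero (Finset.mem_univ k) (sub_self (a k))
  have hq_ne_one : q ≠ 1 := fun h1 =>
    Fintype.card_ne_zero (α := ι) (by simpa [h1] using hq_natDegree.symm)
  set r : R[X] := X ^ n %ₘ q
  have hr : r.natDegree < Fintype.card ι := hq_natDegree ▸ natDegree_modByMonic_lt _ hq hq_ne_one
  calc ∑ k, a k ^ n * v k = ∑ k, r.eval (a k) * v k := by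
        simp [r, eval_modByMonic_eq_of_isRoot _ (hroot _)]
    _ = ∑ j ∈ Finset.range (Fintype.card ι), r.coeff j * ∑ k, a k ^ j * v k := by
        simp only [eval_eq_sum_range' hr, Finset.sum_mul, Finset.mul_sum, mul_assoc]
        exact Finset.sum_comm
    _ = 0 := Finset.sum_eq_zero fun j hj => by rw [h j (Finset.mem_range.mp hj), mul_zero]

theorem Matrix.hadamardPow_mulVec_eq_zero_of_forall_lt_card {R n : Type*} [CommRing R]
    [Nontrivial R] [Fintype n] (A : Matrix n n R) (v : n → R)
    (h : ∀ j < Fintype.card n, (of fun i k => A i k ^ j) *ᵥ v = 0) (m : ℕ) :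
    (of fun i k => A i k ^ m) *ᵥ v = 0 := by
  funext i
  exact Finset.sum_pow_mul_eq_zero_of_forall_lt_card (A i) v
    (fun j hj => congrFun (h j hj) i) m

open ComplexOrder in
theorem Matrix.PosSemidef.hadamardPow {𝕜 n : Type*} [RCLike 𝕜] [Fintype n] {A : Matrix n n 𝕜}
    (hA : A.PosSemidef) (m : ℕ) : (of fun i k => A i k ^ m).PosSemidef := by
  induction m with
  | zero =>
    convert posSemidef_vecMulVec_self_star (1 : n → 𝕜) using 1
    ext i k; simp [vecMulVec_apply]
  | succ m ih =>
    convert ih.hadamard hA using 1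
    ext i k; simp [pow_succ]

open ComplexOrder in
theorem Matrix.PosSemidef.sum_smul_mulVec_eq_zero_iff {𝕜 n ι : Type*} [RCLike 𝕜] [Fintype n]
    [Fintype ι] {M : ι → Matrix n n 𝕜} (hM : ∀ j, (M j).PosSemidef) {c : ι → ℝ}
    (hc : ∀ j, 0 < c j) (v : n → 𝕜) :
    (∑ j, (c j : 𝕜) • M j) *ᵥ v = 0 ↔ ∀ j, M j *ᵥ v = 0 := by
  have hcM (j : ι) : ((c j : 𝕜) • M j).PosSemidef :=
    (hM j).smul (RCLike.ofReal_nonneg.mpr (hc j).le)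
  rw [← (posSemidef_sum Finset.univ fun j _ => hcM j).dotProduct_mulVec_zero_iff, sum_mulVec,
    dotProduct_sum, Finset.sum_eq_zero_iff_of_nonneg fun j _ => (hcM j).dotProduct_mulVec_nonneg v]
  simp only [Finset.mem_univ, forall_const]
  refine forall_congr' fun j => ?_
  rw [(hcM j).dotProduct_mulVec_zero_iff, smul_mulVec,
    smul_eq_zero_iff_right (RCLike.ofReal_ne_zero.mpr (hc j).ne')]

open ComplexOrder in
/-- The kernel of `h_c[A] = c_0 J + c_1 A + ⋯ + c_{N-1} A^{∘(N-1)}` equals the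
simultaneous kernel of all Hadamard powers of `A`. -/
theorem ker_hc_eq_simultaneous_kernel (N : ℕ) (c : Fin N → ℝ) (hc : ∀ j, 0 < c j)
    (A : Matrix (Fin N) (Fin N) ℂ) (hA : A.PosSemidef) (v : Fin N → ℂ) :
    (∑ j : Fin N, (c j : ℂ) • Matrix.of fun i k : Fin N => A i k ^ (j : ℕ)).mulVec v = 0 ↔
      ∀ n : ℕ, (Matrix.of fun i k : Fin N => A i k ^ n).mulVec v = 0 := by
  have hpow (j : Fin N) := hA.hadamardPow j
  refine (PosSemidef.sum_smul_mulVec_eq_zero_iff hpow hc v).trans ?_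
  refine ⟨fun h => hadamardPow_mulVec_eq_zero_of_forall_lt_card A v fun j hj => ?_, fun h j => h j⟩
  exact h ⟨j, by simpa using hj⟩
end

section
/- Let A be an N × N complex positive semidefinite matrix and v ∈ C^N. If A^{∘j} v = 0 for all 0 ≤ j ≤ N-1, then A^{∘M} v = 0 for every integer M ≥ 0. -/
open Matrix BigOperators

lemma key_power_sums {N : ℕ} (x v : Fin N → ℂ)
    (h : ∀ j : ℕ, j < N → ∑ k, x k ^ j * v k = 0) (M : ℕ) :
    ∑ k, x k ^ M * v k = 0 := by
  rcases Nat.eq_zero_or_pos N with hN | hN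
  · subst hN; simp
  -- any polynomial of natDegree < N annihilates
  have hp : ∀ p : Polynomial ℂ, p.natDegree < N → ∑ k, p.eval (x k) * v k = 0 := by
    intro p hdeg
    have : ∀ k, p.eval (x k) = ∑ j ∈ Finset.range N, p.coeff j * x k ^ j := fun k =>
      Polynomial.eval_eq_sum_range' hdeg (x k)
    calc ∑ k, p.eval (x k) * v k
        = ∑ k, ∑ j ∈ Finset.range N, p.coeff j * (x k ^ j * v k) := by
          simp only [this, Finset.sum_mul, mul_assoc]
      _ = ∑ j ∈ Finset.range N, p.coeff j * ∑ k, x k ^ j * v k := by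
          rw [Finset.sum_comm]; simp [Finset.mul_sum]
      _ = 0 := by
          apply Finset.sum_eq_zero; intro j hj
          rw [h j (Finset.mem_range.mp hj), mul_zero]
  set S : Finset ℂ := Finset.image x Finset.univ with hS
  have hScard : S.card ≤ N := le_trans (Finset.card_image_le) (by simp)
  -- fiber sums vanish
  have hfib : ∀ y ∈ S, ∑ k ∈ Finset.univ.filter (fun k => x k = y), v k = 0 := by
    intro y hy
    set p : Polynomial ℂ := ∏ y' ∈ S.erase y, (Polynomial.X - Polynomial.C y') with hpdef
    have hdeg : p.natDegree < N := by
      have h1 : p.natDegree ≤ ∑ y' ∈ S.erase y, (Polynomial.X - Polynomial.C y').natDegree :=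
        Polynomial.natDegree_prod_le _ _
      have h2 : ∑ y' ∈ S.erase y, (Polynomial.X - Polynomial.C y').natDegree
          = (S.erase y).card := by simp [Polynomial.natDegree_X_sub_C]
      have h3 : (S.erase y).card < S.card := Finset.card_erase_lt_of_mem hy
      omega
    have hzero := hp p hdeg
    have heval : ∀ k, p.eval (x k) = if x k = y then p.eval y else 0 := by
      intro k
      by_cases hk : x k = y
      · simp [hk]
      · simp only [hk, if_false, hpdef, Polynomial.eval_prod]
        apply Finset.prod_eq_zero (i := x k)
        · exact Finset.mem_erase.mpr ⟨hk, Finset.mem_image.mpr ⟨k, Finset.mem_univ k, rfl⟩⟩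
        · simp
    have hpy : p.eval y ≠ 0 := by
      simp only [hpdef, Polynomial.eval_prod, Polynomial.eval_sub, Polynomial.eval_X,
        Polynomial.eval_C]
      apply Finset.prod_ne_zero_iff.mpr
      intro y' hy'
      exact sub_ne_zero_of_ne (Ne.symm (Finset.mem_erase.mp hy').1)
    have hsum : ∑ k, p.eval (x k) * v k
        = p.eval y * ∑ k ∈ Finset.univ.filter (fun k => x k = y), v k := by
      rw [Finset.mul_sum, Finset.sum_filter]
      apply Finset.sum_congr rfl
      intro k _
      rw [heval k]
      by_cases hk : x k = y <;> simp [hk]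
    rw [hsum] at hzero
    exact (mul_eq_zero.mp hzero).resolve_left hpy
  -- conclude
  rw [← Finset.sum_fiberwise_of_maps_to (g := x) (t := S)
    (fun k _ => Finset.mem_image.mpr ⟨k, Finset.mem_univ k, rfl⟩) (fun k => x k ^ M * v k)]
  apply Finset.sum_eq_zero
  intro y hy
  have : ∑ k ∈ Finset.univ.filter (fun k => x k = y), x k ^ M * v k
      = y ^ M * ∑ k ∈ Finset.univ.filter (fun k => x k = y), v k := by
    rw [Finset.mul_sum]
    apply Finset.sum_congr rfl
    intro k hk
    rw [(Finset.mem_filter.mp hk).2]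
  rw [this, hfib y hy, mul_zero]

open ComplexOrder in
/-- If `v` is killed by the Hadamard powers `A^{∘0}, …, A^{∘(N-1)}` of a psd matrix `A`,
then `v` is killed by every Hadamard power `A^{∘M}`. -/
theorem hadamard_powers_joint_kernel (N : ℕ) (A : Matrix (Fin N) (Fin N) ℂ)
    (hA : A.PosSemidef) (v : Fin N → ℂ)
    (hv : ∀ j : ℕ, j < N → (Matrix.of fun i k : Fin N => A i k ^ j).mulVec v = 0) :
    ∀ M : ℕ, (Matrix.of fun i k : Fin N => A i k ^ M).mulVec v = 0 := by
  intro M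
  funext i
  have h : ∀ j : ℕ, j < N → ∑ k, A i k ^ j * v k = 0 := by
    intro j hj
    have := congrFun (hv j hj) i
    simpa [Matrix.mulVec, dotProduct] using this
  have := key_power_sums (A i) v h M
  simpa [Matrix.mulVec, dotProduct] using this
end

section
/- Let B = [[a, a g, b], [a ḡ, a|g|^2, c], [b̄, c̄, d]] be a 3 × 3 complex positive semidefinite matrix where a, d ≥ 0 are real and g, b, c ∈ C. Then either a = 0 (in which case b = c = 0) or c = b ḡ; in either case the 2 × 2 matrix [[a, b], [a ḡ, c]] is singular. -/
open Matrix BigOperators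

open scoped ComplexOrder

theorem Matrix.PosSemidef.mulVec_eq_zero_of_forall_eq_zero_or {n 𝕜 : Type*} [Fintype n] [RCLike 𝕜]
    {A : Matrix n n 𝕜} (hA : A.PosSemidef) {x : n → 𝕜}
    (h : ∀ i, x i = 0 ∨ (A *ᵥ x) i = 0) : A *ᵥ x = 0 :=
  (hA.dotProduct_mulVec_zero_iff x).mp <| Finset.sum_eq_zero fun i _ => by
    rcases h i with h | h <;> simp [h]

lemma orbit_matrix_mulVec (a d : ℝ) (g b c : ℂ) :
    Matrix.of ![![(a : ℂ), a * g, b],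
        ![(a : ℂ) * (starRingEnd ℂ) g, (a : ℂ) * ((Complex.normSq g : ℝ) : ℂ), c],
        ![(starRingEnd ℂ) b, (starRingEnd ℂ) c, (d : ℂ)]] *ᵥ ![g, -1, 0] =
      ![0, 0, (starRingEnd ℂ) b * g - (starRingEnd ℂ) c] := by
  ext i
  fin_cases i <;>
    simp [Matrix.mulVec, dotProduct, Fin.sum_univ_three, Complex.normSq_eq_conj_mul_self,
      sub_eq_add_neg, mul_comm, mul_left_comm]

open ComplexOrder in
theorem psd_three_by_three_orbit_general (a d : ℝ) (g b c : ℂ)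
    (hB : (Matrix.of ![![(a : ℂ), a * g, b],
        ![(a : ℂ) * (starRingEnd ℂ) g, (a : ℂ) * ((Complex.normSq g : ℝ) : ℂ), c],
        ![(starRingEnd ℂ) b, (starRingEnd ℂ) c, (d : ℂ)]]).PosSemidef) :
    (((a : ℂ) = 0 ∧ b = 0 ∧ c = 0) ∨ c = b * (starRingEnd ℂ) g) ∧
      Matrix.det (Matrix.of ![![(a : ℂ), b], ![(a : ℂ) * (starRingEnd ℂ) g, c]]) = 0 := by
  -- `(g, -1, 0)` lies in the kernel of the rank-one leading block, so psd forces it into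
  -- the kernel of the whole matrix; the last row then reads `conj b * g = conj c`.
  have hker := hB.mulVec_eq_zero_of_forall_eq_zero_or (x := ![g, -1, 0]) fun i => by
    rw [orbit_matrix_mulVec]
    fin_cases i <;> simp
  have hc : c = b * (starRingEnd ℂ) g := by
    have h := congrFun hker 2
    rw [orbit_matrix_mulVec] at h
    have h' := congrArg (starRingEnd ℂ) h
    simp only [Matrix.cons_val, Pi.zero_apply, map_sub, map_mul, Complex.conj_conj,
      map_zero, sub_eq_zero] at h'
    exact h'.symm
  refine ⟨Or.inr hc, ?_⟩
  rw [Matrix.det_fin_two_of, hc]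
  ring

open ComplexOrder in
/-- Structure of a psd `3 × 3` matrix whose leading `2 × 2` block is rank one with
entries in a group orbit: either `a = 0` (and then `b = c = 0`) or `c = b·conj g`;
in either case the indicated `2 × 2` minor is singular. -/
theorem psd_three_by_three_orbit (a d : ℝ) (ha : 0 ≤ a) (hd : 0 ≤ d) (g b c : ℂ)
    (hB : (Matrix.of ![![(a : ℂ), a * g, b],
        ![(a : ℂ) * (starRingEnd ℂ) g, (a : ℂ) * ((Complex.normSq g : ℝ) : ℂ), c],
        ![(starRingEnd ℂ) b, (starRingEnd ℂ) c, (d : ℂ)]]).PosSemidef) :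
    (((a : ℂ) = 0 ∧ b = 0 ∧ c = 0) ∨ c = b * (starRingEnd ℂ) g) ∧
      Matrix.det (Matrix.of ![![(a : ℂ), b], ![(a : ℂ) * (starRingEnd ℂ) g, c]]) = 0 :=
  psd_three_by_three_orbit_general a d g b c hB
end

section
/- Fix ρ > 0 and integers M ≥ N ≥ 1, positive reals c_0,...,c_{N-1}. For 1 ≤ m ≤ N define C_m := Σ_{j=0}^{m-1} s_{μ(M-N+m,m,j)}(1,...,1)^2 ρ^{m+M-N-j} / c_{N-m+j}, where s is evaluated at m ones. Then 0 < C_1 < C_2 < ... < C_N. -/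
open Matrix BigOperators

/-- The constants `C_m = C(c_m; z^{M-N+m}; m, ρ)` are positive and strictly increasing
in `m` for `1 ≤ m ≤ N`. -/
theorem Cm_pos_strict_mono (ρ : ℝ) (hρ : 0 < ρ) (N M : ℕ) (hN : 1 ≤ N) (hMN : N ≤ M)
    (c : ℕ → ℝ) (hc : ∀ j, j < N → 0 < c j) :
    (0 < ∑ j ∈ Finset.range 1,
        ((M - N + 1).choose j : ℝ) ^ 2 * ((M - N + 1 - j - 1).choose (1 - j - 1) : ℝ) ^ 2
          * ρ ^ (1 + M - N - j) / c (N - 1 + j)) ∧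
      ∀ m : ℕ, 1 ≤ m → m < N →
        (∑ j ∈ Finset.range m,
            ((M - N + m).choose j : ℝ) ^ 2 * ((M - N + m - j - 1).choose (m - j - 1) : ℝ) ^ 2
              * ρ ^ (m + M - N - j) / c (N - m + j)) <
          ∑ j ∈ Finset.range (m + 1),
            ((M - N + (m + 1)).choose j : ℝ) ^ 2
              * ((M - N + (m + 1) - j - 1).choose ((m + 1) - j - 1) : ℝ) ^ 2
              * ρ ^ ((m + 1) + M - N - j) / c (N - (m + 1) + j) := by

  constructor
  · rw [Finset.sum_range_one]
    have hcp := hc (N - 1) (by omega)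
    simp only [Nat.choose_zero_right, Nat.sub_zero, Nat.add_zero]
    have : (M - N + 1 - 1).choose (1 - 1) = 1 := by simp
    rw [this]
    norm_num
    positivity
  · intro m hm hmN
    rw [Finset.sum_range_succ']
    have hkey : ∀ j ∈ Finset.range m,
        ((M - N + m).choose j : ℝ) ^ 2 * ((M - N + m - j - 1).choose (m - j - 1) : ℝ) ^ 2
          * ρ ^ (m + M - N - j) / c (N - m + j) <
        ((M - N + (m + 1)).choose (j + 1) : ℝ) ^ 2
          * ((M - N + (m + 1) - (j + 1) - 1).choose ((m + 1) - (j + 1) - 1) : ℝ) ^ 2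
          * ρ ^ ((m + 1) + M - N - (j + 1)) / c (N - (m + 1) + (j + 1)) := by
      intro j hj
      rw [Finset.mem_range] at hj
      have e1 : M - N + (m + 1) - (j + 1) - 1 = M - N + m - j - 1 := by omega
      have e2 : (m + 1) - (j + 1) - 1 = m - j - 1 := by omega
      have e3 : (m + 1) + M - N - (j + 1) = m + M - N - j := by omega
      have e4 : N - (m + 1) + (j + 1) = N - m + j := by omega
      rw [e1, e2, e3, e4]
      have hcp := hc (N - m + j) (by omega)
      have hD : 0 < ((M - N + m - j - 1).choose (m - j - 1) : ℝ) := by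
        exact_mod_cast Nat.choose_pos (by omega)
      have hB : ((M - N + m).choose j : ℝ) < ((M - N + (m + 1)).choose (j + 1) : ℝ) := by
        have h1 : M - N + (m + 1) = (M - N + m) + 1 := by omega
        rw [h1, Nat.choose_succ_succ]
        have h2 : 0 < (M - N + m).choose (j + 1) := Nat.choose_pos (by omega)
        exact_mod_cast Nat.lt_add_of_pos_right h2
      have hB0 : (0:ℝ) ≤ ((M - N + m).choose j : ℝ) := by positivity
      gcongr
    calc (∑ j ∈ Finset.range m,
            ((M - N + m).choose j : ℝ) ^ 2 * ((M - N + m - j - 1).choose (m - j - 1) : ℝ) ^ 2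
              * ρ ^ (m + M - N - j) / c (N - m + j))
        < ∑ j ∈ Finset.range m,
            ((M - N + (m + 1)).choose (j + 1) : ℝ) ^ 2
              * ((M - N + (m + 1) - (j + 1) - 1).choose ((m + 1) - (j + 1) - 1) : ℝ) ^ 2
              * ρ ^ ((m + 1) + M - N - (j + 1)) / c (N - (m + 1) + (j + 1)) := by
          exact Finset.sum_lt_sum_of_nonempty (by simpa using by omega) hkey
      _ ≤ _ := by
          have hcp := hc (N - (m + 1) + 0) (by omega)
          have : (0:ℝ) ≤ ((M - N + (m + 1)).choose 0 : ℝ) ^ 2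
              * ((M - N + (m + 1) - 0 - 1).choose ((m + 1) - 0 - 1) : ℝ) ^ 2
              * ρ ^ ((m + 1) + M - N - 0) / c (N - (m + 1) + 0) := by positivity
          linarith
end

section
/- Fix positive reals c_0,...,c_{N-1}, ρ > 0, and M ≥ N ≥ 1. Then the constant C(c; z^M; N, ρ) := Σ_{j=0}^{N-1} binom(M,j)^2 binom(M-j-1,N-j-1)^2 ρ^{M-j}/c_j satisfies C(c; z^M; N, ρ) ≥ M · C(c'; z^{M-1}; N-1, ρ) when N ≥ 2, where c' = (c_1, 2c_2, ..., (N-1)c_{N-1}), i.e., Σ_{j=0}^{N-1} binom(M,j)^2 binom(M-j-1,N-j-1)^2 ρ^{M-j}/c_j ≥ M Σ_{j=0}^{N-2} binom(M-1,j)^2 binom(M-j-2,N-j-2)^2 ρ^{M-1-j}/((j+1) c_{j+1}). -/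
open Matrix BigOperators

lemma aux_term_bound (Mr jr a b Y1 Y2 c : ℝ) (hY1 : 0 ≤ Y1) (hY2 : 0 ≤ Y2)
    (hc : 0 < c) (hj : 0 < jr) (hjM : jr ≤ Mr) (key : Mr * b = a * jr) :
    Mr * (b ^ 2 * Y1 * Y2 / (jr * c)) ≤ a ^ 2 * Y1 * Y2 / c := by
  have hM : 0 < Mr := lt_of_lt_of_le hj hjM
  have hb2 : b ^ 2 * Mr ^ 2 = a ^ 2 * jr ^ 2 := by
    linear_combination (Mr * b + a * jr) * key
  calc Mr * (b ^ 2 * Y1 * Y2 / (jr * c)) = (a ^ 2 * Y1 * Y2 / c) * (jr / Mr) := by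
        rw [mul_div_assoc', div_mul_div_comm, div_eq_div_iff (by positivity) (by positivity)]
        linear_combination (Y1 * Y2 * c) * hb2
    _ ≤ (a ^ 2 * Y1 * Y2 / c) * 1 := by
        apply mul_le_mul_of_nonneg_left _ (by positivity)
        rw [div_le_one hM]; exact hjM
    _ = a ^ 2 * Y1 * Y2 / c := mul_one _

/-- The inequality `C(c; z^M; N, ρ) ≥ M · C(c'; z^{M-1}; N-1, ρ)` with
`c' = (c_1, 2c_2, …, (N-1)c_{N-1})`. -/
theorem critical_value_derivative_bound (ρ : ℝ) (hρ : 0 < ρ) (N M : ℕ) (hN : 2 ≤ N)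
    (hMN : N ≤ M) (c : ℕ → ℝ) (hc : ∀ j, j < N → 0 < c j) :
    (∑ j ∈ Finset.range N,
        (M.choose j : ℝ) ^ 2 * ((M - j - 1).choose (N - j - 1) : ℝ) ^ 2
          * ρ ^ (M - j) / c j) ≥
      (M : ℝ) * ∑ j ∈ Finset.range (N - 1),
        ((M - 1).choose j : ℝ) ^ 2 * ((M - j - 2).choose (N - j - 2) : ℝ) ^ 2
          * ρ ^ (M - 1 - j) / (((j : ℝ) + 1) * c (j + 1)) := by
  have hN1 : N = (N - 1) + 1 := by omega
  rw [Finset.mul_sum]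
  have hsplit := Finset.sum_range_succ' (fun j =>
    (M.choose j : ℝ) ^ 2 * ((M - j - 1).choose (N - j - 1) : ℝ) ^ 2
      * ρ ^ (M - j) / c j) (N - 1)
  rw [← hN1] at hsplit
  rw [hsplit]
  have h0 : 0 ≤ (M.choose 0 : ℝ) ^ 2 * ((M - 0 - 1).choose (N - 0 - 1) : ℝ) ^ 2
      * ρ ^ (M - 0) / c 0 := by
    apply div_nonneg
    · positivity
    · exact (hc 0 (by omega)).le
  have hmain : ∑ j ∈ Finset.range (N - 1),
      (M : ℝ) * (((M - 1).choose j : ℝ) ^ 2 * ((M - j - 2).choose (N - j - 2) : ℝ) ^ 2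
        * ρ ^ (M - 1 - j) / (((j : ℝ) + 1) * c (j + 1)))
      ≤ ∑ j ∈ Finset.range (N - 1),
        (M.choose (j+1) : ℝ) ^ 2 * ((M - (j+1) - 1).choose (N - (j+1) - 1) : ℝ) ^ 2
          * ρ ^ (M - (j+1)) / c (j+1) := by
    apply Finset.sum_le_sum
    intro j hj
    simp only [Finset.mem_range] at hj
    have hjN : j + 1 < N := by omega
    have hjM : j + 1 ≤ M := by omega
    have e1 : M - (j+1) - 1 = M - j - 2 := by omega
    have e2 : N - (j+1) - 1 = N - j - 2 := by omega
    have e3 : M - (j+1) = M - 1 - j := by omega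
    rw [e1, e2, e3]
    have hcj : 0 < c (j + 1) := hc (j+1) hjN
    have keyN : M * (M - 1).choose j = M.choose (j + 1) * (j + 1) := by
      have hM1 : M = (M - 1) + 1 := by omega
      have h := Nat.add_one_mul_choose_eq (M - 1) j
      simp only [Nat.succ_eq_add_one, ← hM1] at h
      exact h
    have key : (M : ℝ) * ((M - 1).choose j : ℝ) = (M.choose (j+1) : ℝ) * ((j : ℝ) + 1) := by
      exact_mod_cast keyN
    exact aux_term_bound (M : ℝ) ((j : ℝ) + 1) (M.choose (j+1) : ℝ) ((M - 1).choose j : ℝ)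
      (((M - j - 2).choose (N - j - 2) : ℝ) ^ 2) (ρ ^ (M - 1 - j)) (c (j+1))
      (by positivity) (by positivity) hcj (by positivity)
      (by exact_mod_cast hjM) key
  linarith
end

section
/- Let A be an N × N complex positive semidefinite matrix, suppose a 2 × 2 principal block of A indexed by {l, l'} has the form [[a, a g],[a ḡ, a |g|^2]] for some a ≥ 0 and g ∈ C, and let m be a third index. Then the entries b = A_{l,m} and c = A_{l',m} satisfy c = b ḡ or a = 0 (and in the latter case b = c = 0). -/
open Matrix BigOperators

open ComplexOrder in
/-- If a psd matrix `A` has a `2 × 2` principal block indexed by `l, l'` of the rank-one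
form `[[a, a g], [a conj g, a |g|²]]` with `a ≥ 0`, then for any third index `m`, the
entries `b = A l m` and `c = A l' m` satisfy `c = b · conj g`, or `a = 0` and `b = c = 0`. -/
theorem psd_orbit_block_structure {N : ℕ} (A : Matrix (Fin N) (Fin N) ℂ)
    (hA : A.PosSemidef) (l l' m : Fin N) (hll' : l ≠ l') (hlm : l ≠ m) (hl'm : l' ≠ m)
    (a : ℝ) (ha : 0 ≤ a) (g : ℂ)
    (h11 : A l l = (a : ℂ)) (h12 : A l l' = (a : ℂ) * g)
    (h21 : A l' l = (a : ℂ) * (starRingEnd ℂ) g)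
    (h22 : A l' l' = (a : ℂ) * ((Complex.normSq g : ℝ) : ℂ)) :
    A l' m = A l m * (starRingEnd ℂ) g ∨
      ((a : ℂ) = 0 ∧ A l m = 0 ∧ A l' m = 0) := by
  left
  set B : Matrix (Fin 3) (Fin 3) ℂ := A.submatrix ![l, l', m] ![l, l', m] with hB
  have hBpsd : B.PosSemidef := hA.submatrix _
  set x : Fin 3 → ℂ := ![g, -1, 0] with hx
  have hquad : star x ⬝ᵥ B *ᵥ x = 0 := by
    simp only [hB, hx, dotProduct, Matrix.mulVec, Matrix.submatrix_apply,
      Fin.sum_univ_three, Pi.star_apply, Matrix.cons_val_zero, Matrix.cons_val_one,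
      Matrix.head_cons, Matrix.cons_val_two, Matrix.tail_cons, star_neg, star_one,
      star_zero, h11, h12, h21, h22]
    have hns : ((Complex.normSq g : ℝ) : ℂ) = (starRingEnd ℂ) g * g := by
      rw [Complex.normSq_eq_conj_mul_self]
    rw [hns]
    ring
  have hker : B *ᵥ x = 0 := (hBpsd.dotProduct_mulVec_zero_iff x).mp hquad
  have h2 := congrFun hker 2
  simp only [hB, hx, Matrix.mulVec, dotProduct, Matrix.submatrix_apply,
    Fin.sum_univ_three, Matrix.cons_val_zero, Matrix.cons_val_one, Matrix.head_cons,
    Matrix.cons_val_two, Matrix.tail_cons, Pi.zero_apply, mul_zero, add_zero,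
    mul_neg, mul_one] at h2
  -- h2 : A m l * g + -(A m l') = 0
  have hml' : A m l' = A m l * g := by linear_combination -h2
  have herm := hA.isHermitian.apply m l'
  have herm2 := hA.isHermitian.apply l' m
  calc A l' m = star (A m l') := (hA.isHermitian.apply l' m).symm ▸ rfl
    _ = star (A m l * g) := by rw [hml']
    _ = star (A m l) * star g := by rw [star_mul']
    _ = A l m * (starRingEnd ℂ) g := by rw [hA.isHermitian.apply l m]; rfl
end
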